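/- arXiv:1606.01982 — 8 statements merged into one kernel-verified Lean document; each statement's English description precedes it below -/
import Mathlib

section
/- Let B be the symmetric bilinear form on ℂ^8 defined by B(u,v) = u_1v_1 + u_2v_2 + u_3v_3 + u_4v_4 − u_5v_5 − u_6v_6 − u_7v_7 − u_8v_8. Fix W_1, W_2, W_3, X_1, …, X_4, Y_1, …, Y_4, Z_1, …, Z_4 ∈ ℂ and let R ⊆ ℂ^8 be the span of r_1 = e_1 + W_1 e_4 + X_1 e_6 + Y_1 e_7 + Z_1 e_8, r_2 = e_2 + W_2 e_4 + X_2 e_6 + Y_2 e_7 + Z_2 e_8, r_3 = e_3 + W_3 e_4 + X_3 e_6 + Y_3 e_7 + Z_3 e_8, r_4 = e_5 + X_4 e_6 + Y_4 e_7 + Z_4 e_8. Let P be the 4 × 4 matrix with rows (W_1, X_1, Y_1, Z_1), (W_2, X_2, Y_2, Z_2), (W_3, X_3, Y_3, Z_3), (0, X_4, Y_4, Z_4). Then R = R^± if and only if Pᵀ D P = E, where D = diag(1,1,1,−1) and E = diag(−1,1,1,1). -/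
noncomputable section

/-- The standard basis vectors of `ℂ^8` (indexed `0,…,7` for `e_1,…,e_8`). -/
def e (i : Fin 8) : Fin 8 → ℂ := Pi.single i 1

/-- The symmetric bilinear form
`B(u,v) = u₁v₁ + u₂v₂ + u₃v₃ + u₄v₄ − u₅v₅ − u₆v₆ − u₇v₇ − u₈v₈` on `ℂ^8`. -/
def Bform (u v : Fin 8 → ℂ) : ℂ :=
  u 0 * v 0 + u 1 * v 1 + u 2 * v 2 + u 3 * v 3
    - u 4 * v 4 - u 5 * v 5 - u 6 * v 6 - u 7 * v 7

/-- The `B`-orthogonal complement `R^± = {v : ∀ r ∈ R, B(v,r) = 0}` of a subspace. -/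
def Bperp (R : Submodule ℂ (Fin 8 → ℂ)) : Submodule ℂ (Fin 8 → ℂ) where
  carrier := {v | ∀ r ∈ R, Bform v r = 0}
  zero_mem' := by intro r hr; simp [Bform]
  add_mem' := by
    intro a b ha hb r hr
    have h1 := ha r hr
    have h2 := hb r hr
    simp only [Set.mem_setOf_eq, Bform, Pi.add_apply] at *
    linear_combination h1 + h2
  smul_mem' := by
    intro c a ha r hr
    have h1 := ha r hr
    simp only [Set.mem_setOf_eq, Bform, Pi.smul_apply, smul_eq_mul] at *
    linear_combination c * h1

/-- for fixed `u`, the solution set of `Bform u v = 0` in `v` is a submodule -/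
def rightKer (u : Fin 8 → ℂ) : Submodule ℂ (Fin 8 → ℂ) where
  carrier := {v | Bform u v = 0}
  zero_mem' := by simp [Bform]
  add_mem' := by
    intro a b ha hb
    simp only [Set.mem_setOf_eq, Bform, Pi.add_apply] at *
    linear_combination ha + hb
  smul_mem' := by
    intro c a ha
    simp only [Set.mem_setOf_eq, Bform, Pi.smul_apply, smul_eq_mul] at *
    linear_combination c * ha

lemma diagDD : Matrix.diagonal ![(1:ℂ),1,1,-1] * Matrix.diagonal ![1,1,1,-1] = 1 := by
  ext i j
  fin_cases i <;> fin_cases j <;>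
    simp [Matrix.mul_apply, Fin.sum_univ_four, Matrix.diagonal, Matrix.one_apply]

lemma diagEE : Matrix.diagonal ![(-1:ℂ),1,1,1] * Matrix.diagonal ![-1,1,1,1] = 1 := by
  ext i j
  fin_cases i <;> fin_cases j <;>
    simp [Matrix.mul_apply, Fin.sum_univ_four, Matrix.diagonal, Matrix.one_apply]

/-- equivalence of the two symmetric matrix conditions -/
lemma cond_swap (P : Matrix (Fin 4) (Fin 4) ℂ) :
    P.transpose * Matrix.diagonal ![1,1,1,-1] * P = Matrix.diagonal ![-1,1,1,1] ↔
    P * Matrix.diagonal ![-1,1,1,1] * P.transpose = Matrix.diagonal ![1,1,1,-1] := by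
  constructor
  · intro h
    have h1 : (Matrix.diagonal ![(-1:ℂ),1,1,1] * P.transpose * Matrix.diagonal ![1,1,1,-1]) * P = 1 := by
      rw [Matrix.mul_assoc, Matrix.mul_assoc, ← Matrix.mul_assoc P.transpose (Matrix.diagonal ![1,1,1,-1]) P, h, diagEE]
    have h2 : P * (Matrix.diagonal ![(-1:ℂ),1,1,1] * P.transpose * Matrix.diagonal ![1,1,1,-1]) = 1 := mul_eq_one_comm.mp h1
    have h3 := congrArg (· * Matrix.diagonal ![(1:ℂ),1,1,-1]) h2
    simpa only [Matrix.mul_assoc, diagDD, Matrix.mul_one, Matrix.one_mul] using h3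
  · intro h
    have h1 : (Matrix.diagonal ![(1:ℂ),1,1,-1] * P * Matrix.diagonal ![-1,1,1,1]) * P.transpose = 1 := by
      rw [Matrix.mul_assoc, Matrix.mul_assoc, ← Matrix.mul_assoc P (Matrix.diagonal ![-1,1,1,1]) P.transpose, h, diagDD]
    have h2 : P.transpose * (Matrix.diagonal ![(1:ℂ),1,1,-1] * P * Matrix.diagonal ![-1,1,1,1]) = 1 := mul_eq_one_comm.mp h1
    have h3 := congrArg (· * Matrix.diagonal ![(-1:ℂ),1,1,1]) h2
    simpa only [Matrix.mul_assoc, diagEE, Matrix.mul_one, Matrix.one_mul] using h3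

set_option maxHeartbeats 4000000 in
/-- Case 2 (pivot columns `{1,2,3,5}`): the span of
`r₁ = e₁ + W₁e₄ + X₁e₆ + Y₁e₇ + Z₁e₈`, `r₂ = e₂ + W₂e₄ + X₂e₆ + Y₂e₇ + Z₂e₈`,
`r₃ = e₃ + W₃e₄ + X₃e₆ + Y₃e₇ + Z₃e₈`, `r₄ = e₅ + X₄e₆ + Y₄e₇ + Z₄e₈`
is self-dual if and only if `Pᵀ D P = E` where `P` is the parameter matrix,
`D = diag(1,1,1,−1)` and `E = diag(−1,1,1,1)`. -/
theorem case2_self_dual_iff (W1 W2 W3 X1 X2 X3 X4 Y1 Y2 Y3 Y4 Z1 Z2 Z3 Z4 : ℂ)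
    (R : Submodule ℂ (Fin 8 → ℂ))
    (hR : R = Submodule.span ℂ
        {e 0 + W1 • e 3 + X1 • e 5 + Y1 • e 6 + Z1 • e 7,
         e 1 + W2 • e 3 + X2 • e 5 + Y2 • e 6 + Z2 • e 7,
         e 2 + W3 • e 3 + X3 • e 5 + Y3 • e 6 + Z3 • e 7,
         e 4 + X4 • e 5 + Y4 • e 6 + Z4 • e 7})
    (P : Matrix (Fin 4) (Fin 4) ℂ)
    (hP : P = !![W1, X1, Y1, Z1; W2, X2, Y2, Z2; W3, X3, Y3, Z3; 0, X4, Y4, Z4]) :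
    R = Bperp R ↔
      P.transpose * Matrix.diagonal ![1, 1, 1, -1] * P = Matrix.diagonal ![-1, 1, 1, 1] := by
  have p00 : P 0 0 = W1 := by simp [hP]
  have p01 : P 0 1 = X1 := by simp [hP]
  have p02 : P 0 2 = Y1 := by simp [hP]
  have p03 : P 0 3 = Z1 := by simp [hP]
  have p10 : P 1 0 = W2 := by simp [hP]
  have p11 : P 1 1 = X2 := by simp [hP]
  have p12 : P 1 2 = Y2 := by simp [hP]
  have p13 : P 1 3 = Z2 := by simp [hP]
  have p20 : P 2 0 = W3 := by simp [hP]
  have p21 : P 2 1 = X3 := by simp [hP]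
  have p22 : P 2 2 = Y3 := by simp [hP]
  have p23 : P 2 3 = Z3 := by simp [hP]
  have p30 : P 3 0 = 0 := by simp [hP]
  have p31 : P 3 1 = X4 := by simp [hP]
  have p32 : P 3 2 = Y4 := by simp [hP]
  have p33 : P 3 3 = Z4 := by simp [hP]
  set g1 : Fin 8 → ℂ := e 0 + W1 • e 3 + X1 • e 5 + Y1 • e 6 + Z1 • e 7 with hg1
  set g2 : Fin 8 → ℂ := e 1 + W2 • e 3 + X2 • e 5 + Y2 • e 6 + Z2 • e 7 with hg2
  set g3 : Fin 8 → ℂ := e 2 + W3 • e 3 + X3 • e 5 + Y3 • e 6 + Z3 • e 7 with hg3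
  set g4 : Fin 8 → ℂ := e 4 + X4 • e 5 + Y4 • e 6 + Z4 • e 7 with hg4
  have m1 : g1 ∈ R := by
    rw [hR]; exact Submodule.subset_span (Or.inl rfl)
  have m2 : g2 ∈ R := by
    rw [hR]; exact Submodule.subset_span (Or.inr (Or.inl rfl))
  have m3 : g3 ∈ R := by
    rw [hR]; exact Submodule.subset_span (Or.inr (Or.inr (Or.inl rfl)))
  have m4 : g4 ∈ R := by
    rw [hR]; exact Submodule.subset_span (Or.inr (Or.inr (Or.inr rfl)))
  rw [cond_swap]
  constructor
  · -- self-dual → matrix condition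
    intro h
    have b11 : Bform g1 g1 = 0 := (h ▸ m1) g1 m1
    have b12 : Bform g1 g2 = 0 := (h ▸ m1) g2 m2
    have b13 : Bform g1 g3 = 0 := (h ▸ m1) g3 m3
    have b14 : Bform g1 g4 = 0 := (h ▸ m1) g4 m4
    have b21 : Bform g2 g1 = 0 := (h ▸ m2) g1 m1
    have b22 : Bform g2 g2 = 0 := (h ▸ m2) g2 m2
    have b23 : Bform g2 g3 = 0 := (h ▸ m2) g3 m3
    have b24 : Bform g2 g4 = 0 := (h ▸ m2) g4 m4
    have b31 : Bform g3 g1 = 0 := (h ▸ m3) g1 m1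
    have b32 : Bform g3 g2 = 0 := (h ▸ m3) g2 m2
    have b33 : Bform g3 g3 = 0 := (h ▸ m3) g3 m3
    have b34 : Bform g3 g4 = 0 := (h ▸ m3) g4 m4
    have b41 : Bform g4 g1 = 0 := (h ▸ m4) g1 m1
    have b42 : Bform g4 g2 = 0 := (h ▸ m4) g2 m2
    have b43 : Bform g4 g3 = 0 := (h ▸ m4) g3 m3
    have b44 : Bform g4 g4 = 0 := (h ▸ m4) g4 m4
    simp only [hg1, hg2, hg3, hg4] at b11 b12 b13 b14 b21 b22 b23 b24 b31 b32 b33 b34 b41 b42 b43 b44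
    simp [Bform, e, Pi.single_apply] at b11 b12 b13 b14 b21 b22 b23 b24 b31 b32 b33 b34 b41 b42 b43 b44
    rw [← Matrix.ext_iff]
    intro i j
    fin_cases i <;> fin_cases j <;>
      simp (config := { decide := true }) [Matrix.mul_apply, Fin.sum_univ_four,
        Matrix.diagonal_apply, Matrix.transpose_apply,
        p00,p01,p02,p03,p10,p11,p12,p13,p20,p21,p22,p23,p30,p31,p32,p33]
    · linear_combination -b11
    · linear_combination -b12
    · linear_combination -b13
    · linear_combination -b14
    · linear_combination -b21
    · linear_combination -b22
    · linear_combination -b23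
    · linear_combination -b24
    · linear_combination -b31
    · linear_combination -b32
    · linear_combination -b33
    · linear_combination -b34
    · linear_combination -b41
    · linear_combination -b42
    · linear_combination -b43
    · linear_combination -b44
  · -- matrix condition → self-dual
    intro h
    have q := Matrix.ext_iff.mpr h
    have q00 := q 0 0; have q01 := q 0 1; have q02 := q 0 2; have q03 := q 0 3
    have q10 := q 1 0; have q11 := q 1 1; have q12 := q 1 2; have q13 := q 1 3
    have q20 := q 2 0; have q21 := q 2 1; have q22 := q 2 2; have q23 := q 2 3
    have q30 := q 3 0; have q31 := q 3 1; have q32 := q 3 2; have q33 := q 3 3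
    simp (config := { decide := true }) [Matrix.mul_apply, Fin.sum_univ_four,
      Matrix.diagonal_apply, Matrix.transpose_apply,
      p00,p01,p02,p03,p10,p11,p12,p13,p20,p21,p22,p23,p30,p31,p32,p33]
      at q00 q01 q02 q03 q10 q11 q12 q13 q20 q21 q22 q23 q30 q31 q32 q33
    apply le_antisymm
    · -- R ⊆ Bperp R
      intro x hx
      have hx' : x ∈ Submodule.span ℂ ({g1, g2, g3, g4} : Set (Fin 8 → ℂ)) := hR ▸ hx
      intro r hr
      have hr' : r ∈ Submodule.span ℂ ({g1, g2, g3, g4} : Set (Fin 8 → ℂ)) := hR ▸ hr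
      -- first reduce: Bform x r = 0 for x in span and r in span
      have key : ∀ u ∈ ({g1, g2, g3, g4} : Set (Fin 8 → ℂ)),
          ∀ w ∈ ({g1, g2, g3, g4} : Set (Fin 8 → ℂ)), Bform u w = 0 := by
        intro u hu w hw
        simp only [Set.mem_insert_iff, Set.mem_singleton_iff] at hu hw
        rcases hu with rfl|rfl|rfl|rfl <;> rcases hw with rfl|rfl|rfl|rfl <;>
          simp only [hg1, hg2, hg3, hg4] <;>
          simp [Bform, e, Pi.single_apply] <;>
          [linear_combination -q00; linear_combination -q01; linear_combination -q02;
           linear_combination -q03; linear_combination -q10; linear_combination -q11;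
           linear_combination -q12; linear_combination -q13; linear_combination -q20;
           linear_combination -q21; linear_combination -q22; linear_combination -q23;
           linear_combination -q30; linear_combination -q31; linear_combination -q32;
           linear_combination -q33]
      -- x is in every rightKer-style left set... use bilinearity in both args
      -- show : for u in span, Bform u r = 0 when r in span
      have stepr : ∀ u ∈ ({g1, g2, g3, g4} : Set (Fin 8 → ℂ)), Bform u r = 0 := by
        intro u hu
        have : Submodule.span ℂ ({g1, g2, g3, g4} : Set (Fin 8 → ℂ)) ≤ rightKer u :=
          Submodule.span_le.mpr (fun w hw => key u hu w hw)
        exact this hr'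
      -- now vary x : the set {u | Bform u r = 0} is a submodule (rightKer of r under symmetry)
      have : Submodule.span ℂ ({g1, g2, g3, g4} : Set (Fin 8 → ℂ)) ≤ Bperp R := by
        apply Submodule.span_le.mpr
        intro u hu r' hr2
        have hr2' : r' ∈ Submodule.span ℂ ({g1, g2, g3, g4} : Set (Fin 8 → ℂ)) := hR ▸ hr2
        have : Submodule.span ℂ ({g1, g2, g3, g4} : Set (Fin 8 → ℂ)) ≤ rightKer u :=
          Submodule.span_le.mpr (fun w hw => key u hu w hw)
        exact this hr2'
      exact this hx' r hr
    · -- Bperp R ⊆ R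
      intro v hv
      have hv1 : Bform v g1 = 0 := hv g1 m1
      have hv2 : Bform v g2 = 0 := hv g2 m2
      have hv3 : Bform v g3 = 0 := hv g3 m3
      have hv4 : Bform v g4 = 0 := hv g4 m4
      simp only [hg1, hg2, hg3, hg4] at hv1 hv2 hv3 hv4
      simp [Bform, e, Pi.single_apply] at hv1 hv2 hv3 hv4
      set t : Fin 4 → ℂ :=
        ![v 3 - (v 0 * W1 + v 1 * W2 + v 2 * W3),
          -(v 5 - (v 0 * X1 + v 1 * X2 + v 2 * X3 + v 4 * X4)),
          -(v 6 - (v 0 * Y1 + v 1 * Y2 + v 2 * Y3 + v 4 * Y4)),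
          -(v 7 - (v 0 * Z1 + v 1 * Z2 + v 2 * Z3 + v 4 * Z4))] with ht
      have hPt : P.mulVec t = 0 := by
        funext j
        fin_cases j <;>
          simp [Matrix.mulVec, dotProduct, Fin.sum_univ_four, ht,
            p00,p01,p02,p03,p10,p11,p12,p13,p20,p21,p22,p23,p30,p31,p32,p33]
        · linear_combination hv1 + v 0 * q00 + v 1 * q01 + v 2 * q02 + v 4 * q03
        · linear_combination hv2 + v 0 * q10 + v 1 * q11 + v 2 * q12 + v 4 * q13
        · linear_combination hv3 + v 0 * q20 + v 1 * q21 + v 2 * q22 + v 4 * q23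
        · linear_combination hv4 + v 0 * q30 + v 1 * q31 + v 2 * q32 + v 4 * q33
      have hQ : (Matrix.diagonal ![(-1:ℂ),1,1,1] * P.transpose * Matrix.diagonal ![1,1,1,-1]) * P = 1 := by
        have h' : P.transpose * Matrix.diagonal ![(1:ℂ),1,1,-1] * P = Matrix.diagonal ![-1,1,1,1] :=
          (cond_swap P).mpr h
        rw [Matrix.mul_assoc, Matrix.mul_assoc,
          ← Matrix.mul_assoc P.transpose (Matrix.diagonal ![1,1,1,-1]) P, h', diagEE]
      have ht0 : t = 0 := by
        have h2 : (Matrix.diagonal ![(-1:ℂ),1,1,1] * P.transpose * Matrix.diagonal ![1,1,1,-1]).mulVec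
            (P.mulVec t) = 0 := by rw [hPt, Matrix.mulVec_zero]
        rwa [Matrix.mulVec_mulVec, hQ, Matrix.one_mulVec] at h2
      have e0 := congrFun ht0 0
      have e1 := congrFun ht0 1
      have e2 := congrFun ht0 2
      have e3 := congrFun ht0 3
      simp [ht] at e0 e1 e2 e3
      have hvw : v = v 0 • g1 + v 1 • g2 + v 2 • g3 + v 4 • g4 := by
        funext k
        simp only [hg1, hg2, hg3, hg4, Pi.add_apply, Pi.smul_apply, smul_eq_mul]
        fin_cases k <;> simp [e, Pi.single_apply]
        · linear_combination e0
        · linear_combination -e1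
        · linear_combination -e2
        · linear_combination -e3
      rw [hvw]
      exact add_mem (add_mem (add_mem (Submodule.smul_mem _ _ m1) (Submodule.smul_mem _ _ m2))
        (Submodule.smul_mem _ _ m3)) (Submodule.smul_mem _ _ m4)
end
end

section
/- Let B be the symmetric bilinear form on ℂ^8 defined by B(u,v) = u_1v_1 + u_2v_2 + u_3v_3 + u_4v_4 − u_5v_5 − u_6v_6 − u_7v_7 − u_8v_8. Fix W_1, W_2, X_1, X_2, X_3, Y_1, …, Y_4, Z_1, …, Z_4 ∈ ℂ and let R ⊆ ℂ^8 be the span of r_1 = e_1 + W_1 e_3 + X_1 e_5 + Y_1 e_7 + Z_1 e_8, r_2 = e_2 + W_2 e_3 + X_2 e_5 + Y_2 e_7 + Z_2 e_8, r_3 = e_4 + X_3 e_5 + Y_3 e_7 + Z_3 e_8, r_4 = e_6 + Y_4 e_7 + Z_4 e_8. Let P be the 4 × 4 matrix with rows (W_1, X_1, Y_1, Z_1), (W_2, X_2, Y_2, Z_2), (0, X_3, Y_3, Z_3), (0, 0, Y_4, Z_4). Then R = R^± if and only if Pᵀ D P = E, where D = diag(1,1,1,−1) and E = diag(−1,1,1,1).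 -/
noncomputable section

lemma mem_Bperp {R : Submodule ℂ (Fin 8 → ℂ)} {v : Fin 8 → ℂ} :
    v ∈ Bperp R ↔ ∀ r ∈ R, Bform v r = 0 := Iff.rfl

lemma Dexp : (Matrix.diagonal ![(1:ℂ),1,1,-1]) = !![1,0,0,0; 0,1,0,0; 0,0,1,0; 0,0,0,-1] := by
  ext i j; fin_cases i <;> fin_cases j <;>
    simp [Matrix.diagonal, Matrix.vecHead, Matrix.vecTail]

lemma Eexp : (Matrix.diagonal ![(-1:ℂ),1,1,1]) = !![-1,0,0,0; 0,1,0,0; 0,0,1,0; 0,0,0,1] := by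
  ext i j; fin_cases i <;> fin_cases j <;>
    simp [Matrix.diagonal, Matrix.vecHead, Matrix.vecTail]

lemma DD' : (Matrix.diagonal ![(1:ℂ),1,1,-1]) * (Matrix.diagonal ![(1:ℂ),1,1,-1]) = 1 := by
  rw [Dexp]
  ext i j; fin_cases i <;> fin_cases j <;>
    simp [Matrix.mul_apply, Fin.sum_univ_succ, Matrix.vecHead, Matrix.vecTail, Matrix.one_apply]

lemma EE' : (Matrix.diagonal ![(-1:ℂ),1,1,1]) * (Matrix.diagonal ![(-1:ℂ),1,1,1]) = 1 := by
  rw [Eexp]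
  ext i j; fin_cases i <;> fin_cases j <;>
    simp [Matrix.mul_apply, Fin.sum_univ_succ, Matrix.vecHead, Matrix.vecTail, Matrix.one_apply]

lemma flipL (P : Matrix (Fin 4) (Fin 4) ℂ)
    (h : P * Matrix.diagonal ![(-1:ℂ),1,1,1] * P.transpose = Matrix.diagonal ![(1:ℂ),1,1,-1]) :
    P.transpose * Matrix.diagonal ![(1:ℂ),1,1,-1] * P = Matrix.diagonal ![(-1:ℂ),1,1,1] := by
  set D := Matrix.diagonal ![(1:ℂ),1,1,-1] with hD
  set E := Matrix.diagonal ![(-1:ℂ),1,1,1] with hE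
  have h1 : P * (E * P.transpose * D) = 1 := by
    rw [← Matrix.mul_assoc, ← Matrix.mul_assoc, h, DD']
  have h2 : (E * P.transpose * D) * P = 1 := (mul_eq_one_comm).1 h1
  have h3 : E * (E * P.transpose * D * P) = E * 1 := by rw [h2]
  rw [Matrix.mul_one, ← Matrix.mul_assoc, ← Matrix.mul_assoc, ← Matrix.mul_assoc,
    EE', Matrix.one_mul] at h3
  rw [Matrix.mul_assoc] at h3 ⊢
  exact h3

lemma flipR (P : Matrix (Fin 4) (Fin 4) ℂ)
    (h : P.transpose * Matrix.diagonal ![(1:ℂ),1,1,-1] * P = Matrix.diagonal ![(-1:ℂ),1,1,1]) :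
    P * Matrix.diagonal ![(-1:ℂ),1,1,1] * P.transpose = Matrix.diagonal ![(1:ℂ),1,1,-1] := by
  set D := Matrix.diagonal ![(1:ℂ),1,1,-1] with hD
  set E := Matrix.diagonal ![(-1:ℂ),1,1,1] with hE
  have h1 : P.transpose * (D * P * E) = 1 := by
    rw [← Matrix.mul_assoc, ← Matrix.mul_assoc, h, EE']
  have h2 : (D * P * E) * P.transpose = 1 := (mul_eq_one_comm).1 h1
  have h3 : D * (D * P * E * P.transpose) = D * 1 := by rw [h2]
  rw [Matrix.mul_one, ← Matrix.mul_assoc, ← Matrix.mul_assoc, ← Matrix.mul_assoc,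
    DD', Matrix.one_mul] at h3
  rw [Matrix.mul_assoc] at h3 ⊢
  exact h3


set_option maxHeartbeats 2000000 in
/-- Case 7 (pivot columns `{1,2,4,6}`): the span of
`r₁ = e₁ + W₁e₃ + X₁e₅ + Y₁e₇ + Z₁e₈`, `r₂ = e₂ + W₂e₃ + X₂e₅ + Y₂e₇ + Z₂e₈`,
`r₃ = e₄ + X₃e₅ + Y₃e₇ + Z₃e₈`, `r₄ = e₆ + Y₄e₇ + Z₄e₈`
is self-dual if and only if `Pᵀ D P = E` where `P` is the parameter matrix,
`D = diag(1,1,1,−1)` and `E = diag(−1,1,1,1)`. -/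
theorem case7_self_dual_iff (W1 W2 X1 X2 X3 Y1 Y2 Y3 Y4 Z1 Z2 Z3 Z4 : ℂ)
    (R : Submodule ℂ (Fin 8 → ℂ))
    (hR : R = Submodule.span ℂ
        {e 0 + W1 • e 2 + X1 • e 4 + Y1 • e 6 + Z1 • e 7,
         e 1 + W2 • e 2 + X2 • e 4 + Y2 • e 6 + Z2 • e 7,
         e 3 + X3 • e 4 + Y3 • e 6 + Z3 • e 7,
         e 5 + Y4 • e 6 + Z4 • e 7})
    (P : Matrix (Fin 4) (Fin 4) ℂ)
    (hP : P = !![W1, X1, Y1, Z1; W2, X2, Y2, Z2; 0, X3, Y3, Z3; 0, 0, Y4, Z4]) :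
    R = Bperp R ↔
      P.transpose * Matrix.diagonal ![1, 1, 1, -1] * P = Matrix.diagonal ![-1, 1, 1, 1] := by
  subst hR hP
  set r1 : Fin 8 → ℂ := e 0 + W1 • e 2 + X1 • e 4 + Y1 • e 6 + Z1 • e 7 with hr1
  set r2 : Fin 8 → ℂ := e 1 + W2 • e 2 + X2 • e 4 + Y2 • e 6 + Z2 • e 7 with hr2
  set r3 : Fin 8 → ℂ := e 3 + X3 • e 4 + Y3 • e 6 + Z3 • e 7 with hr3
  set r4 : Fin 8 → ℂ := e 5 + Y4 • e 6 + Z4 • e 7 with hr4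
  set S : Set (Fin 8 → ℂ) := {r1, r2, r3, r4} with hS
  have hm1 : r1 ∈ Submodule.span ℂ S := Submodule.subset_span (by simp [hS])
  have hm2 : r2 ∈ Submodule.span ℂ S := Submodule.subset_span (by simp [hS])
  have hm3 : r3 ∈ Submodule.span ℂ S := Submodule.subset_span (by simp [hS])
  have hm4 : r4 ∈ Submodule.span ℂ S := Submodule.subset_span (by simp [hS])
  constructor
  · -- self-dual → matrix equation
    intro h
    have key : ∀ w ∈ Submodule.span ℂ S, ∀ r ∈ Submodule.span ℂ S, Bform w r = 0 := by
      intro w hw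
      have : w ∈ Bperp (Submodule.span ℂ S) := h ▸ hw
      exact this
    have b11 : 1 + W1*W1 - X1*X1 - Y1*Y1 - Z1*Z1 = 0 := by
      have t := key r1 hm1 r1 hm1
      simp [Bform, hr1, e, Pi.single_apply] at t
      linear_combination t
    have b12 : W1*W2 - X1*X2 - Y1*Y2 - Z1*Z2 = 0 := by
      have t := key r1 hm1 r2 hm2
      simp [Bform, hr1, hr2, e, Pi.single_apply] at t
      linear_combination t
    have b13 : -(X1*X3) - Y1*Y3 - Z1*Z3 = 0 := by
      have t := key r1 hm1 r3 hm3
      simp [Bform, hr1, hr3, e, Pi.single_apply] at t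
      linear_combination t
    have b14 : -(Y1*Y4) - Z1*Z4 = 0 := by
      have t := key r1 hm1 r4 hm4
      simp [Bform, hr1, hr4, e, Pi.single_apply] at t
      linear_combination t
    have b22 : 1 + W2*W2 - X2*X2 - Y2*Y2 - Z2*Z2 = 0 := by
      have t := key r2 hm2 r2 hm2
      simp [Bform, hr2, e, Pi.single_apply] at t
      linear_combination t
    have b23 : -(X2*X3) - Y2*Y3 - Z2*Z3 = 0 := by
      have t := key r2 hm2 r3 hm3
      simp [Bform, hr2, hr3, e, Pi.single_apply] at t
      linear_combination t
    have b24 : -(Y2*Y4) - Z2*Z4 = 0 := by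
      have t := key r2 hm2 r4 hm4
      simp [Bform, hr2, hr4, e, Pi.single_apply] at t
      linear_combination t
    have b33 : 1 - X3*X3 - Y3*Y3 - Z3*Z3 = 0 := by
      have t := key r3 hm3 r3 hm3
      simp [Bform, hr3, e, Pi.single_apply] at t
      linear_combination t
    have b34 : -(Y3*Y4) - Z3*Z4 = 0 := by
      have t := key r3 hm3 r4 hm4
      simp [Bform, hr3, hr4, e, Pi.single_apply] at t
      linear_combination t
    have b44 : -1 - Y4*Y4 - Z4*Z4 = 0 := by
      have t := key r4 hm4 r4 hm4
      simp [Bform, hr4, e, Pi.single_apply] at t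
      linear_combination t
    apply flipL
    rw [Dexp, Eexp]
    ext i j
    fin_cases i <;> fin_cases j <;>
      simp [Matrix.mul_apply, Fin.sum_univ_succ, Matrix.vecHead, Matrix.vecTail]
    · linear_combination -b11
    · linear_combination -b12
    · linear_combination -b13
    · linear_combination -b14
    · linear_combination -b12
    · linear_combination -b22
    · linear_combination -b23
    · linear_combination -b24
    · linear_combination -b13
    · linear_combination -b23
    · linear_combination -b33
    · linear_combination -b34
    · linear_combination -b14
    · linear_combination -b24
    · linear_combination -b34
    · linear_combination -b44
  · -- matrix equation → self-dual
    intro h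
    have hM := flipR _ h
    rw [Dexp, Eexp] at h hM
    -- scalar consequences of PᵀDP = E
    have n00 : W1*W1 + W2*W2 = -1 := by
      have t := Matrix.ext_iff.2 h 0 0
      simp [Matrix.mul_apply, Fin.sum_univ_succ, Matrix.vecHead, Matrix.vecTail] at t
      linear_combination t
    have n01 : W1*X1 + W2*X2 = 0 := by
      have t := Matrix.ext_iff.2 h 0 1
      simp [Matrix.mul_apply, Fin.sum_univ_succ, Matrix.vecHead, Matrix.vecTail] at t
      linear_combination t
    have n02 : W1*Y1 + W2*Y2 = 0 := by
      have t := Matrix.ext_iff.2 h 0 2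
      simp [Matrix.mul_apply, Fin.sum_univ_succ, Matrix.vecHead, Matrix.vecTail] at t
      linear_combination t
    have n03 : W1*Z1 + W2*Z2 = 0 := by
      have t := Matrix.ext_iff.2 h 0 3
      simp [Matrix.mul_apply, Fin.sum_univ_succ, Matrix.vecHead, Matrix.vecTail] at t
      linear_combination t
    have n11 : X1*X1 + X2*X2 + X3*X3 = 1 := by
      have t := Matrix.ext_iff.2 h 1 1
      simp [Matrix.mul_apply, Fin.sum_univ_succ, Matrix.vecHead, Matrix.vecTail] at t
      linear_combination t
    have n12 : X1*Y1 + X2*Y2 + X3*Y3 = 0 := by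
      have t := Matrix.ext_iff.2 h 1 2
      simp [Matrix.mul_apply, Fin.sum_univ_succ, Matrix.vecHead, Matrix.vecTail] at t
      linear_combination t
    have n13 : X1*Z1 + X2*Z2 + X3*Z3 = 0 := by
      have t := Matrix.ext_iff.2 h 1 3
      simp [Matrix.mul_apply, Fin.sum_univ_succ, Matrix.vecHead, Matrix.vecTail] at t
      linear_combination t
    have n22 : Y1*Y1 + Y2*Y2 + Y3*Y3 - Y4*Y4 = 1 := by
      have t := Matrix.ext_iff.2 h 2 2
      simp [Matrix.mul_apply, Fin.sum_univ_succ, Matrix.vecHead, Matrix.vecTail] at t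
      linear_combination t
    have n23 : Y1*Z1 + Y2*Z2 + Y3*Z3 - Y4*Z4 = 0 := by
      have t := Matrix.ext_iff.2 h 2 3
      simp [Matrix.mul_apply, Fin.sum_univ_succ, Matrix.vecHead, Matrix.vecTail] at t
      linear_combination t
    have n33 : Z1*Z1 + Z2*Z2 + Z3*Z3 - Z4*Z4 = 1 := by
      have t := Matrix.ext_iff.2 h 3 3
      simp [Matrix.mul_apply, Fin.sum_univ_succ, Matrix.vecHead, Matrix.vecTail] at t
      linear_combination t
    -- scalar consequences of P E Pᵀ = D
    have m00 : -(W1*W1) + X1*X1 + Y1*Y1 + Z1*Z1 = 1 := by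
      have t := Matrix.ext_iff.2 hM 0 0
      simp [Matrix.mul_apply, Fin.sum_univ_succ, Matrix.vecHead, Matrix.vecTail] at t
      linear_combination t
    have m01 : -(W1*W2) + X1*X2 + Y1*Y2 + Z1*Z2 = 0 := by
      have t := Matrix.ext_iff.2 hM 0 1
      simp [Matrix.mul_apply, Fin.sum_univ_succ, Matrix.vecHead, Matrix.vecTail] at t
      linear_combination t
    have m02 : X1*X3 + Y1*Y3 + Z1*Z3 = 0 := by
      have t := Matrix.ext_iff.2 hM 0 2
      simp [Matrix.mul_apply, Fin.sum_univ_succ, Matrix.vecHead, Matrix.vecTail] at t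
      linear_combination t
    have m03 : Y1*Y4 + Z1*Z4 = 0 := by
      have t := Matrix.ext_iff.2 hM 0 3
      simp [Matrix.mul_apply, Fin.sum_univ_succ, Matrix.vecHead, Matrix.vecTail] at t
      linear_combination t
    have m11 : -(W2*W2) + X2*X2 + Y2*Y2 + Z2*Z2 = 1 := by
      have t := Matrix.ext_iff.2 hM 1 1
      simp [Matrix.mul_apply, Fin.sum_univ_succ, Matrix.vecHead, Matrix.vecTail] at t
      linear_combination t
    have m12 : X2*X3 + Y2*Y3 + Z2*Z3 = 0 := by
      have t := Matrix.ext_iff.2 hM 1 2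
      simp [Matrix.mul_apply, Fin.sum_univ_succ, Matrix.vecHead, Matrix.vecTail] at t
      linear_combination t
    have m13 : Y2*Y4 + Z2*Z4 = 0 := by
      have t := Matrix.ext_iff.2 hM 1 3
      simp [Matrix.mul_apply, Fin.sum_univ_succ, Matrix.vecHead, Matrix.vecTail] at t
      linear_combination t
    have m22 : X3*X3 + Y3*Y3 + Z3*Z3 = 1 := by
      have t := Matrix.ext_iff.2 hM 2 2
      simp [Matrix.mul_apply, Fin.sum_univ_succ, Matrix.vecHead, Matrix.vecTail] at t
      linear_combination t
    have m23 : Y3*Y4 + Z3*Z4 = 0 := by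
      have t := Matrix.ext_iff.2 hM 2 3
      simp [Matrix.mul_apply, Fin.sum_univ_succ, Matrix.vecHead, Matrix.vecTail] at t
      linear_combination t
    have m33 : Y4*Y4 + Z4*Z4 = -1 := by
      have t := Matrix.ext_iff.2 hM 3 3
      simp [Matrix.mul_apply, Fin.sum_univ_succ, Matrix.vecHead, Matrix.vecTail] at t
      linear_combination t
    apply le_antisymm
    · -- span ≤ Bperp
      rw [Submodule.span_le]
      intro u hu
      have hbgen : ∀ w ∈ S, ∀ r ∈ S, Bform w r = 0 := by
        intro w hw r hr
        simp only [hS, Set.mem_insert_iff, Set.mem_singleton_iff] at hw hr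
        rcases hw with rfl | rfl | rfl | rfl <;> rcases hr with rfl | rfl | rfl | rfl <;>
          simp [Bform, hr1, hr2, hr3, hr4, e, Pi.single_apply]
        · first
          | linear_combination -m00
          | linear_combination m00
        · first
          | linear_combination -m01
          | linear_combination m01
        · first
          | linear_combination -m02
          | linear_combination m02
        · first
          | linear_combination -m03
          | linear_combination m03
        · first
          | linear_combination -m01
          | linear_combination m01
        · first
          | linear_combination -m11
          | linear_combination m11
        · first
          | linear_combination -m12
          | linear_combination m12
        · first
          | linear_combination -m13
          | linear_combination m13
        · first
          | linear_combination -m02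
          | linear_combination m02
        · first
          | linear_combination -m12
          | linear_combination m12
        · first
          | linear_combination -m22
          | linear_combination m22
        · first
          | linear_combination -m23
          | linear_combination m23
        · first
          | linear_combination -m03
          | linear_combination m03
        · first
          | linear_combination -m13
          | linear_combination m13
        · first
          | linear_combination -m23
          | linear_combination m23
        · first
          | linear_combination -m33
          | linear_combination m33
      intro r hr
      induction hr using Submodule.span_induction with
      | mem x hx => exact hbgen u hu x hx
      | zero => simp [Bform]
      | add x y hx hy ihx ihy =>
        simp only [Bform, Pi.add_apply] at *
        linear_combination ihx + ihy
      | smul a x hx ihx =>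
        simp only [Bform, Pi.smul_apply, smul_eq_mul] at *
        linear_combination a * ihx
    · -- Bperp ≤ span
      intro v hv
      have E1 : v 0 + v 2 * W1 - v 4 * X1 - v 6 * Y1 - v 7 * Z1 = 0 := by
        have t := hv r1 hm1
        simp [Bform, hr1, e, Pi.single_apply] at t
        linear_combination t
      have E2 : v 1 + v 2 * W2 - v 4 * X2 - v 6 * Y2 - v 7 * Z2 = 0 := by
        have t := hv r2 hm2
        simp [Bform, hr2, e, Pi.single_apply] at t
        linear_combination t
      have E3 : v 3 - v 4 * X3 - v 6 * Y3 - v 7 * Z3 = 0 := by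
        have t := hv r3 hm3
        simp [Bform, hr3, e, Pi.single_apply] at t
        linear_combination t
      have E4 : -(v 5) - v 6 * Y4 - v 7 * Z4 = 0 := by
        have t := hv r4 hm4
        simp [Bform, hr4, e, Pi.single_apply] at t
        linear_combination t
      have hv2 : v 2 = v 0 * W1 + v 1 * W2 := by
        linear_combination -(W1 * E1) - W2 * E2 + (v 2) * n00 - (v 4) * n01 - (v 6) * n02 - (v 7) * n03
      have hv4 : v 4 = v 0 * X1 + v 1 * X2 + v 3 * X3 := by
        linear_combination -(X1 * E1) - X2 * E2 - X3 * E3 + (v 2) * n01 - (v 4) * n11 - (v 6) * n12 - (v 7) * n13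
      have hv6 : v 6 = v 0 * Y1 + v 1 * Y2 + v 3 * Y3 + v 5 * Y4 := by
        linear_combination -(Y1 * E1) - Y2 * E2 - Y3 * E3 + Y4 * E4 + (v 2) * n02 - (v 4) * n12 - (v 6) * n22 - (v 7) * n23
      have hv7 : v 7 = v 0 * Z1 + v 1 * Z2 + v 3 * Z3 + v 5 * Z4 := by
        linear_combination -(Z1 * E1) - Z2 * E2 - Z3 * E3 + Z4 * E4 + (v 2) * n03 - (v 4) * n13 - (v 6) * n23 - (v 7) * n33
      have hrep : v = v 0 • r1 + v 1 • r2 + v 3 • r3 + v 5 • r4 := by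
        funext k
        fin_cases k
        · simp [hr1, hr2, hr3, hr4, e, Pi.single_apply]
        · simp [hr1, hr2, hr3, hr4, e, Pi.single_apply]
        · simp [hr1, hr2, hr3, hr4, e, Pi.single_apply]
          linear_combination hv2
        · simp [hr1, hr2, hr3, hr4, e, Pi.single_apply]
        · simp [hr1, hr2, hr3, hr4, e, Pi.single_apply]
          linear_combination hv4
        · simp [hr1, hr2, hr3, hr4, e, Pi.single_apply]
        · simp [hr1, hr2, hr3, hr4, e, Pi.single_apply]
          linear_combination hv6
        · simp [hr1, hr2, hr3, hr4, e, Pi.single_apply]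
          linear_combination hv7
      rw [hrep]
      exact Submodule.add_mem _
        (Submodule.add_mem _
          (Submodule.add_mem _ (Submodule.smul_mem _ _ hm1) (Submodule.smul_mem _ _ hm2))
          (Submodule.smul_mem _ _ hm3))
        (Submodule.smul_mem _ _ hm4)
end
end

section
/- Let B be the symmetric bilinear form on ℂ^8 defined by B(u,v) = u_1v_1 + u_2v_2 + u_3v_3 + u_4v_4 − u_5v_5 − u_6v_6 − u_7v_7 − u_8v_8. Fix W_1, W_2, X_1, X_2, Y_1, …, Y_4, Z_1, …, Z_4 ∈ ℂ and let R ⊆ ℂ^8 be the span of r_1 = e_1 + W_1 e_3 + X_1 e_4 + Y_1 e_7 + Z_1 e_8, r_2 = e_2 + W_2 e_3 + X_2 e_4 + Y_2 e_7 + Z_2 e_8, r_3 = e_5 + Y_3 e_7 + Z_3 e_8, r_4 = e_6 + Y_4 e_7 + Z_4 e_8. Let P be the 4 × 4 matrix with rows (W_1, X_1, Y_1, Z_1), (W_2, X_2, Y_2, Z_2), (0, 0, Y_3, Z_3), (0, 0, Y_4, Z_4). Then R = R^± if and only if Pᵀ D P = E, where D = diag(1,1,−1,−1) and E = diag(−1,−1,1,1).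 -/
noncomputable section

set_option maxHeartbeats 4000000

/- ### Auxiliary lemmas -/

lemma Ddiag : (Matrix.diagonal ![1,1,-1,-1] : Matrix (Fin 4) (Fin 4) ℂ)
    = !![1,0,0,0; 0,1,0,0; 0,0,-1,0; 0,0,0,-1] := by
  ext i j; fin_cases i <;> fin_cases j <;> simp [Matrix.diagonal, Matrix.vecHead, Matrix.vecTail]

lemma Ediag : (Matrix.diagonal ![-1,-1,1,1] : Matrix (Fin 4) (Fin 4) ℂ)
    = !![-1,0,0,0; 0,-1,0,0; 0,0,1,0; 0,0,0,1] := by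
  ext i j; fin_cases i <;> fin_cases j <;> simp [Matrix.diagonal, Matrix.vecHead, Matrix.vecTail]

lemma Ptr (W1 W2 X1 X2 Y1 Y2 Y3 Y4 Z1 Z2 Z3 Z4 : ℂ) :
    (!![W1, X1, Y1, Z1; W2, X2, Y2, Z2; 0, 0, Y3, Z3; 0, 0, Y4, Z4] : Matrix (Fin 4) (Fin 4) ℂ).transpose
    = !![W1, W2, 0, 0; X1, X2, 0, 0; Y1, Y2, Y3, Y4; Z1, Z2, Z3, Z4] := by
  ext i j; fin_cases i <;> fin_cases j <;> rfl

/-- Flipping `P D Pᵀ = E` to `Pᵀ D P = E` (note `E = -D`, `D² = 1`). -/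
lemma flipDE (P : Matrix (Fin 4) (Fin 4) ℂ) :
    P * Matrix.diagonal ![1,1,-1,-1] * P.transpose = Matrix.diagonal ![-1,-1,1,1] ↔
    P.transpose * Matrix.diagonal ![1,1,-1,-1] * P = Matrix.diagonal ![-1,-1,1,1] := by
  set D : Matrix (Fin 4) (Fin 4) ℂ := Matrix.diagonal ![1,1,-1,-1] with hD
  have hE : Matrix.diagonal (![-1,-1,1,1] : Fin 4 → ℂ) = -D := by
    rw [hD]
    ext i j
    fin_cases i <;> fin_cases j <;> simp [Matrix.diagonal]
  have hDD : D * D = 1 := by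
    rw [hD, Matrix.diagonal_mul_diagonal]
    ext i j
    fin_cases i <;> fin_cases j <;> simp [Matrix.diagonal, Matrix.one_apply]
  rw [hE]
  constructor
  · intro h
    have h1 : P * (D * P.transpose * (-D)) = 1 := by
      calc P * (D * P.transpose * (-D)) = (P * D * P.transpose) * (-D) := by
            noncomm_ring
        _ = (-D) * (-D) := by rw [h]
        _ = 1 := by rw [Matrix.neg_mul, Matrix.mul_neg, neg_neg, hDD]
    have h2 := mul_eq_one_comm.mp h1
    have h3 : D * (D * P.transpose * -D * P) = D * 1 := by rw [h2]
    have h4 : P.transpose * -D * P = D := by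
      calc P.transpose * -D * P = (D * D) * P.transpose * -D * P := by rw [hDD]; noncomm_ring
        _ = D * (D * P.transpose * -D * P) := by noncomm_ring
        _ = D * 1 := h3
        _ = D := by rw [Matrix.mul_one]
    calc P.transpose * D * P = -(P.transpose * -D * P) := by noncomm_ring
      _ = -D := by rw [h4]
  · intro h
    have h1 : P.transpose * (D * P * (-D)) = 1 := by
      calc P.transpose * (D * P * (-D)) = (P.transpose * D * P) * (-D) := by noncomm_ring
        _ = (-D) * (-D) := by rw [h]
        _ = 1 := by rw [Matrix.neg_mul, Matrix.mul_neg, neg_neg, hDD]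
    have h2 := mul_eq_one_comm.mp h1
    have h3 : D * (D * P * -D * P.transpose) = D * 1 := by rw [h2]
    have h4 : P * -D * P.transpose = D := by
      calc P * -D * P.transpose = (D * D) * P * -D * P.transpose := by rw [hDD]; noncomm_ring
        _ = D * (D * P * -D * P.transpose) := by noncomm_ring
        _ = D * 1 := h3
        _ = D := by rw [Matrix.mul_one]
    calc P * D * P.transpose = -(P * -D * P.transpose) := by noncomm_ring
      _ = -D := by rw [h4]

/-- Membership in the perp of a span can be checked on generators. -/
lemma mem_Bperp_span (S : Set (Fin 8 → ℂ)) (v : Fin 8 → ℂ)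
    (h : ∀ s ∈ S, Bform v s = 0) : v ∈ Bperp (Submodule.span ℂ S) := by
  intro r hr
  induction hr using Submodule.span_induction with
  | mem x hx => exact h x hx
  | zero => simp [Bform]
  | add x y hx hy ihx ihy =>
      simp only [Bform, Pi.add_apply] at *
      linear_combination ihx + ihy
  | smul a x hx ih =>
      simp only [Bform, Pi.smul_apply, smul_eq_mul] at *
      linear_combination a * ih

/-- The row (Gram) equations give `P D Pᵀ = E`. -/
lemma rowMat (W1 W2 X1 X2 Y1 Y2 Y3 Y4 Z1 Z2 Z3 Z4 : ℂ)
    (g11 : W1*W1 + X1*X1 - Y1*Y1 - Z1*Z1 = -1)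
    (g12 : W1*W2 + X1*X2 - Y1*Y2 - Z1*Z2 = 0)
    (g13 : Y1*Y3 + Z1*Z3 = 0)
    (g14 : Y1*Y4 + Z1*Z4 = 0)
    (g22 : W2*W2 + X2*X2 - Y2*Y2 - Z2*Z2 = -1)
    (g23 : Y2*Y3 + Z2*Z3 = 0)
    (g24 : Y2*Y4 + Z2*Z4 = 0)
    (g33 : Y3*Y3 + Z3*Z3 = -1)
    (g34 : Y3*Y4 + Z3*Z4 = 0)
    (g44 : Y4*Y4 + Z4*Z4 = -1) :
    (!![W1, X1, Y1, Z1; W2, X2, Y2, Z2; 0, 0, Y3, Z3; 0, 0, Y4, Z4] : Matrix (Fin 4) (Fin 4) ℂ)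
      * Matrix.diagonal ![1,1,-1,-1] *
      (!![W1, X1, Y1, Z1; W2, X2, Y2, Z2; 0, 0, Y3, Z3; 0, 0, Y4, Z4]).transpose
      = Matrix.diagonal ![-1,-1,1,1] := by
  rw [Ddiag, Ediag, Ptr]
  ext i j
  fin_cases i <;> fin_cases j <;>
    simp [Matrix.mul_apply, Fin.sum_univ_four, Matrix.cons_val_two, Matrix.cons_val_three,
      Matrix.vecHead, Matrix.vecTail] <;>
    first
      | linear_combination g11
      | linear_combination g12
      | linear_combination g13
      | linear_combination g14
      | linear_combination g22
      | linear_combination g23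
      | linear_combination g24
      | linear_combination g33
      | linear_combination g34
      | linear_combination g44
      | linear_combination -g13
      | linear_combination -g14
      | linear_combination -g23
      | linear_combination -g24
      | linear_combination -g33
      | linear_combination -g34
      | linear_combination -g44

/-- Case 10 (pivot columns `{1,2,5,6}`): the span of
`r₁ = e₁ + W₁e₃ + X₁e₄ + Y₁e₇ + Z₁e₈`, `r₂ = e₂ + W₂e₃ + X₂e₄ + Y₂e₇ + Z₂e₈`,
`r₃ = e₅ + Y₃e₇ + Z₃e₈`, `r₄ = e₆ + Y₄e₇ + Z₄e₈`
is self-dual if and only if `Pᵀ D P = E` where `P` is the parameter matrix,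
`D = diag(1,1,−1,−1)` and `E = diag(−1,−1,1,1)`. -/
theorem case10_self_dual_iff (W1 W2 X1 X2 Y1 Y2 Y3 Y4 Z1 Z2 Z3 Z4 : ℂ)
    (R : Submodule ℂ (Fin 8 → ℂ))
    (hR : R = Submodule.span ℂ
        {e 0 + W1 • e 2 + X1 • e 3 + Y1 • e 6 + Z1 • e 7,
         e 1 + W2 • e 2 + X2 • e 3 + Y2 • e 6 + Z2 • e 7,
         e 4 + Y3 • e 6 + Z3 • e 7,
         e 5 + Y4 • e 6 + Z4 • e 7})
    (P : Matrix (Fin 4) (Fin 4) ℂ)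
    (hP : P = !![W1, X1, Y1, Z1; W2, X2, Y2, Z2; 0, 0, Y3, Z3; 0, 0, Y4, Z4]) :
    R = Bperp R ↔
      P.transpose * Matrix.diagonal ![1, 1, -1, -1] * P = Matrix.diagonal ![-1, -1, 1, 1] := by
  subst hP hR
  have m1 : (e 0 + W1 • e 2 + X1 • e 3 + Y1 • e 6 + Z1 • e 7) ∈
      ({e 0 + W1 • e 2 + X1 • e 3 + Y1 • e 6 + Z1 • e 7,
        e 1 + W2 • e 2 + X2 • e 3 + Y2 • e 6 + Z2 • e 7,
        e 4 + Y3 • e 6 + Z3 • e 7,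
        e 5 + Y4 • e 6 + Z4 • e 7} : Set (Fin 8 → ℂ)) := Set.mem_insert _ _
  have m2 : (e 1 + W2 • e 2 + X2 • e 3 + Y2 • e 6 + Z2 • e 7) ∈
      ({e 0 + W1 • e 2 + X1 • e 3 + Y1 • e 6 + Z1 • e 7,
        e 1 + W2 • e 2 + X2 • e 3 + Y2 • e 6 + Z2 • e 7,
        e 4 + Y3 • e 6 + Z3 • e 7,
        e 5 + Y4 • e 6 + Z4 • e 7} : Set (Fin 8 → ℂ)) :=
    Set.mem_insert_of_mem _ (Set.mem_insert _ _)
  have m3 : (e 4 + Y3 • e 6 + Z3 • e 7) ∈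
      ({e 0 + W1 • e 2 + X1 • e 3 + Y1 • e 6 + Z1 • e 7,
        e 1 + W2 • e 2 + X2 • e 3 + Y2 • e 6 + Z2 • e 7,
        e 4 + Y3 • e 6 + Z3 • e 7,
        e 5 + Y4 • e 6 + Z4 • e 7} : Set (Fin 8 → ℂ)) :=
    Set.mem_insert_of_mem _ (Set.mem_insert_of_mem _ (Set.mem_insert _ _))
  have m4 : (e 5 + Y4 • e 6 + Z4 • e 7) ∈
      ({e 0 + W1 • e 2 + X1 • e 3 + Y1 • e 6 + Z1 • e 7,
        e 1 + W2 • e 2 + X2 • e 3 + Y2 • e 6 + Z2 • e 7,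
        e 4 + Y3 • e 6 + Z3 • e 7,
        e 5 + Y4 • e 6 + Z4 • e 7} : Set (Fin 8 → ℂ)) :=
    Set.mem_insert_of_mem _ (Set.mem_insert_of_mem _ (Set.mem_insert_of_mem _ rfl))
  have s1 := Submodule.subset_span (R := ℂ) m1
  have s2 := Submodule.subset_span (R := ℂ) m2
  have s3 := Submodule.subset_span (R := ℂ) m3
  have s4 := Submodule.subset_span (R := ℂ) m4
  constructor
  · -- self-dual → matrix equation
    intro h
    have p1 := h ▸ s1
    have p2 := h ▸ s2
    have p3 := h ▸ s3
    have p4 := h ▸ s4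
    have g11 : W1*W1 + X1*X1 - Y1*Y1 - Z1*Z1 = -1 := by
      have := p1 _ s1; simp [Bform, e] at this
      first | linear_combination this | linear_combination -this
    have g12 : W1*W2 + X1*X2 - Y1*Y2 - Z1*Z2 = 0 := by
      have := p1 _ s2; simp [Bform, e] at this
      first | linear_combination this | linear_combination -this
    have g13 : Y1*Y3 + Z1*Z3 = 0 := by
      have := p1 _ s3; simp [Bform, e] at this
      first | linear_combination this | linear_combination -this
    have g14 : Y1*Y4 + Z1*Z4 = 0 := by
      have := p1 _ s4; simp [Bform, e] at this
      first | linear_combination this | linear_combination -this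
    have g22 : W2*W2 + X2*X2 - Y2*Y2 - Z2*Z2 = -1 := by
      have := p2 _ s2; simp [Bform, e] at this
      first | linear_combination this | linear_combination -this
    have g23 : Y2*Y3 + Z2*Z3 = 0 := by
      have := p2 _ s3; simp [Bform, e] at this
      first | linear_combination this | linear_combination -this
    have g24 : Y2*Y4 + Z2*Z4 = 0 := by
      have := p2 _ s4; simp [Bform, e] at this
      first | linear_combination this | linear_combination -this
    have g33 : Y3*Y3 + Z3*Z3 = -1 := by
      have := p3 _ s3; simp [Bform, e] at this
      first | linear_combination this | linear_combination -this
    have g34 : Y3*Y4 + Z3*Z4 = 0 := by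
      have := p3 _ s4; simp [Bform, e] at this
      first | linear_combination this | linear_combination -this
    have g44 : Y4*Y4 + Z4*Z4 = -1 := by
      have := p4 _ s4; simp [Bform, e] at this
      first | linear_combination this | linear_combination -this
    exact (flipDE _).mp (rowMat W1 W2 X1 X2 Y1 Y2 Y3 Y4 Z1 Z2 Z3 Z4
      g11 g12 g13 g14 g22 g23 g24 g33 g34 g44)
  · -- matrix equation → self-dual
    intro h
    have hrow := (flipDE _).mpr h
    -- extract the column equations from h
    rw [Ddiag, Ediag, Ptr] at h hrow
    have c1 : W1*W1 + W2*W2 = -1 := by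
      have := congrFun (congrFun h 0) 0
      simp [Matrix.mul_apply, Fin.sum_univ_four, Matrix.cons_val_two, Matrix.cons_val_three,
        Matrix.vecHead, Matrix.vecTail] at this
      first | linear_combination this | linear_combination -this
    have c2 : W1*X1 + W2*X2 = 0 := by
      have := congrFun (congrFun h 0) 1
      simp [Matrix.mul_apply, Fin.sum_univ_four, Matrix.cons_val_two, Matrix.cons_val_three,
        Matrix.vecHead, Matrix.vecTail] at this
      first | linear_combination this | linear_combination -this
    have c3 : W1*Y1 + W2*Y2 = 0 := by
      have := congrFun (congrFun h 0) 2
      simp [Matrix.mul_apply, Fin.sum_univ_four, Matrix.cons_val_two, Matrix.cons_val_three,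
        Matrix.vecHead, Matrix.vecTail] at this
      first | linear_combination this | linear_combination -this
    have c4 : W1*Z1 + W2*Z2 = 0 := by
      have := congrFun (congrFun h 0) 3
      simp [Matrix.mul_apply, Fin.sum_univ_four, Matrix.cons_val_two, Matrix.cons_val_three,
        Matrix.vecHead, Matrix.vecTail] at this
      first | linear_combination this | linear_combination -this
    have c5 : X1*X1 + X2*X2 = -1 := by
      have := congrFun (congrFun h 1) 1
      simp [Matrix.mul_apply, Fin.sum_univ_four, Matrix.cons_val_two, Matrix.cons_val_three,
        Matrix.vecHead, Matrix.vecTail] at this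
      first | linear_combination this | linear_combination -this
    have c6 : X1*Y1 + X2*Y2 = 0 := by
      have := congrFun (congrFun h 1) 2
      simp [Matrix.mul_apply, Fin.sum_univ_four, Matrix.cons_val_two, Matrix.cons_val_three,
        Matrix.vecHead, Matrix.vecTail] at this
      first | linear_combination this | linear_combination -this
    have c7 : X1*Z1 + X2*Z2 = 0 := by
      have := congrFun (congrFun h 1) 3
      simp [Matrix.mul_apply, Fin.sum_univ_four, Matrix.cons_val_two, Matrix.cons_val_three,
        Matrix.vecHead, Matrix.vecTail] at this
      first | linear_combination this | linear_combination -this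
    have c8 : Y1*Y1 + Y2*Y2 - Y3*Y3 - Y4*Y4 = 1 := by
      have := congrFun (congrFun h 2) 2
      simp [Matrix.mul_apply, Fin.sum_univ_four, Matrix.cons_val_two, Matrix.cons_val_three,
        Matrix.vecHead, Matrix.vecTail] at this
      first | linear_combination this | linear_combination -this
    have c9 : Y1*Z1 + Y2*Z2 - Y3*Z3 - Y4*Z4 = 0 := by
      have := congrFun (congrFun h 2) 3
      simp [Matrix.mul_apply, Fin.sum_univ_four, Matrix.cons_val_two, Matrix.cons_val_three,
        Matrix.vecHead, Matrix.vecTail] at this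
      first | linear_combination this | linear_combination -this
    have c10 : Z1*Z1 + Z2*Z2 - Z3*Z3 - Z4*Z4 = 1 := by
      have := congrFun (congrFun h 3) 3
      simp [Matrix.mul_apply, Fin.sum_univ_four, Matrix.cons_val_two, Matrix.cons_val_three,
        Matrix.vecHead, Matrix.vecTail] at this
      first | linear_combination this | linear_combination -this
    -- extract the row (Gram) equations from hrow
    have g11 : W1*W1 + X1*X1 - Y1*Y1 - Z1*Z1 = -1 := by
      have := congrFun (congrFun hrow 0) 0
      simp [Matrix.mul_apply, Fin.sum_univ_four, Matrix.cons_val_two, Matrix.cons_val_three,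
        Matrix.vecHead, Matrix.vecTail] at this
      first | linear_combination this | linear_combination -this
    have g12 : W1*W2 + X1*X2 - Y1*Y2 - Z1*Z2 = 0 := by
      have := congrFun (congrFun hrow 0) 1
      simp [Matrix.mul_apply, Fin.sum_univ_four, Matrix.cons_val_two, Matrix.cons_val_three,
        Matrix.vecHead, Matrix.vecTail] at this
      first | linear_combination this | linear_combination -this
    have g13 : Y1*Y3 + Z1*Z3 = 0 := by
      have := congrFun (congrFun hrow 0) 2
      simp [Matrix.mul_apply, Fin.sum_univ_four, Matrix.cons_val_two, Matrix.cons_val_three,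
        Matrix.vecHead, Matrix.vecTail] at this
      first | linear_combination this | linear_combination -this
    have g14 : Y1*Y4 + Z1*Z4 = 0 := by
      have := congrFun (congrFun hrow 0) 3
      simp [Matrix.mul_apply, Fin.sum_univ_four, Matrix.cons_val_two, Matrix.cons_val_three,
        Matrix.vecHead, Matrix.vecTail] at this
      first | linear_combination this | linear_combination -this
    have g22 : W2*W2 + X2*X2 - Y2*Y2 - Z2*Z2 = -1 := by
      have := congrFun (congrFun hrow 1) 1
      simp [Matrix.mul_apply, Fin.sum_univ_four, Matrix.cons_val_two, Matrix.cons_val_three,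
        Matrix.vecHead, Matrix.vecTail] at this
      first | linear_combination this | linear_combination -this
    have g23 : Y2*Y3 + Z2*Z3 = 0 := by
      have := congrFun (congrFun hrow 1) 2
      simp [Matrix.mul_apply, Fin.sum_univ_four, Matrix.cons_val_two, Matrix.cons_val_three,
        Matrix.vecHead, Matrix.vecTail] at this
      first | linear_combination this | linear_combination -this
    have g24 : Y2*Y4 + Z2*Z4 = 0 := by
      have := congrFun (congrFun hrow 1) 3
      simp [Matrix.mul_apply, Fin.sum_univ_four, Matrix.cons_val_two, Matrix.cons_val_three,
        Matrix.vecHead, Matrix.vecTail] at this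
      first | linear_combination this | linear_combination -this
    have g33 : Y3*Y3 + Z3*Z3 = -1 := by
      have := congrFun (congrFun hrow 2) 2
      simp [Matrix.mul_apply, Fin.sum_univ_four, Matrix.cons_val_two, Matrix.cons_val_three,
        Matrix.vecHead, Matrix.vecTail] at this
      first | linear_combination this | linear_combination -this
    have g34 : Y3*Y4 + Z3*Z4 = 0 := by
      have := congrFun (congrFun hrow 2) 3
      simp [Matrix.mul_apply, Fin.sum_univ_four, Matrix.cons_val_two, Matrix.cons_val_three,
        Matrix.vecHead, Matrix.vecTail] at this
      first | linear_combination this | linear_combination -this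
    have g44 : Y4*Y4 + Z4*Z4 = -1 := by
      have := congrFun (congrFun hrow 3) 3
      simp [Matrix.mul_apply, Fin.sum_univ_four, Matrix.cons_val_two, Matrix.cons_val_three,
        Matrix.vecHead, Matrix.vecTail] at this
      first | linear_combination this | linear_combination -this
    apply le_antisymm
    · -- span ⊆ perp
      rw [Submodule.span_le]
      rintro x (rfl | rfl | rfl | rfl) <;>
        refine mem_Bperp_span _ _ ?_ <;>
        rintro s (rfl | rfl | rfl | rfl) <;>
        simp [Bform, e] <;>
        first
          | linear_combination g11 | linear_combination -g11
          | linear_combination g12 | linear_combination -g12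
          | linear_combination g13 | linear_combination -g13
          | linear_combination g14 | linear_combination -g14
          | linear_combination g22 | linear_combination -g22
          | linear_combination g23 | linear_combination -g23
          | linear_combination g24 | linear_combination -g24
          | linear_combination g33 | linear_combination -g33
          | linear_combination g34 | linear_combination -g34
          | linear_combination g44 | linear_combination -g44
    · -- perp ⊆ span
      intro v hv
      have E1 : v 0 + W1 * v 2 + X1 * v 3 - Y1 * v 6 - Z1 * v 7 = 0 := by
        have := hv _ s1; simp [Bform, e] at this
        first | linear_combination this | linear_combination -this
      have E2 : v 1 + W2 * v 2 + X2 * v 3 - Y2 * v 6 - Z2 * v 7 = 0 := by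
        have := hv _ s2; simp [Bform, e] at this
        first | linear_combination this | linear_combination -this
      have E3 : v 4 + Y3 * v 6 + Z3 * v 7 = 0 := by
        have := hv _ s3; simp [Bform, e] at this
        first | linear_combination this | linear_combination -this
      have E4 : v 5 + Y4 * v 6 + Z4 * v 7 = 0 := by
        have := hv _ s4; simp [Bform, e] at this
        first | linear_combination this | linear_combination -this
      have h2 : v 2 = W1 * v 0 + W2 * v 1 := by
        linear_combination (-W1)*E1 + (-W2)*E2 + (v 2)*c1 + (v 3)*c2 + (-(v 6))*c3 + (-(v 7))*c4
      have h3 : v 3 = X1 * v 0 + X2 * v 1 := by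
        linear_combination (-X1)*E1 + (-X2)*E2 + (v 2)*c2 + (v 3)*c5 + (-(v 6))*c6 + (-(v 7))*c7
      have h6 : v 6 = Y1 * v 0 + Y2 * v 1 + Y3 * v 4 + Y4 * v 5 := by
        linear_combination (-Y1)*E1 + (-Y2)*E2 + (-Y3)*E3 + (-Y4)*E4
          + (v 2)*c3 + (v 3)*c6 + (-(v 6))*c8 + (-(v 7))*c9
      have h7 : v 7 = Z1 * v 0 + Z2 * v 1 + Z3 * v 4 + Z4 * v 5 := by
        linear_combination (-Z1)*E1 + (-Z2)*E2 + (-Z3)*E3 + (-Z4)*E4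
          + (v 2)*c4 + (v 3)*c7 + (-(v 6))*c9 + (-(v 7))*c10
      have key : v = v 0 • (e 0 + W1 • e 2 + X1 • e 3 + Y1 • e 6 + Z1 • e 7)
          + v 1 • (e 1 + W2 • e 2 + X2 • e 3 + Y2 • e 6 + Z2 • e 7)
          + v 4 • (e 4 + Y3 • e 6 + Z3 • e 7)
          + v 5 • (e 5 + Y4 • e 6 + Z4 • e 7) := by
        funext i
        fin_cases i <;>
          simp [e] <;>
          first
            | rfl
            | (linear_combination h2)
            | (linear_combination h3)
            | (linear_combination h6)
            | (linear_combination h7)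
      rw [key]
      exact add_mem (add_mem (add_mem (Submodule.smul_mem _ _ s1) (Submodule.smul_mem _ _ s2))
        (Submodule.smul_mem _ _ s3)) (Submodule.smul_mem _ _ s4)
end
end

section
/- Let B be the symmetric bilinear form on ℂ^8 defined by B(u,v) = u_1v_1 + u_2v_2 + u_3v_3 + u_4v_4 − u_5v_5 − u_6v_6 − u_7v_7 − u_8v_8. Fix W_1, X_1, …, X_4, Y_1, …, Y_4, Z_1, …, Z_4 ∈ ℂ and let R ⊆ ℂ^8 be the span of r_1 = e_1 + W_1 e_2 + X_1 e_6 + Y_1 e_7 + Z_1 e_8, r_2 = e_3 + X_2 e_6 + Y_2 e_7 + Z_2 e_8, r_3 = e_4 + X_3 e_6 + Y_3 e_7 + Z_3 e_8, r_4 = e_5 + X_4 e_6 + Y_4 e_7 + Z_4 e_8. Let P be the 4 × 4 matrix with rows (W_1, X_1, Y_1, Z_1), (0, X_2, Y_2, Z_2), (0, X_3, Y_3, Z_3), (0, X_4, Y_4, Z_4). Then R = R^± if and only if Pᵀ D P = E, where D = diag(1,1,1,−1) and E = diag(−1,1,1,1). -/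
noncomputable section

set_option maxHeartbeats 1000000

lemma bperp_span_iff (S : Set (Fin 8 → ℂ)) (v : Fin 8 → ℂ) :
    v ∈ Bperp (Submodule.span ℂ S) ↔ ∀ s ∈ S, Bform v s = 0 := by
  rw [mem_Bperp]
  constructor
  · intro h s hs; exact h s (Submodule.subset_span hs)
  · intro h r hr
    induction hr using Submodule.span_induction with
    | mem x hx => exact h x hx
    | zero => simp [Bform]
    | add x y _ _ hx hy =>
        simp only [Bform, Pi.add_apply] at *
        linear_combination hx + hy
    | smul c x _ hx =>
        simp only [Bform, Pi.smul_apply, smul_eq_mul] at *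
        linear_combination c * hx

lemma prod_lit (W1 X1 X2 X3 X4 Y1 Y2 Y3 Y4 Z1 Z2 Z3 Z4 : ℂ) :
    (!![W1, X1, Y1, Z1; 0, X2, Y2, Z2; 0, X3, Y3, Z3; 0, X4, Y4, Z4] : Matrix (Fin 4) (Fin 4) ℂ).transpose * Matrix.diagonal ![1, 1, 1, -1] * !![W1, X1, Y1, Z1; 0, X2, Y2, Z2; 0, X3, Y3, Z3; 0, X4, Y4, Z4]
    = !![W1*W1, W1*X1, W1*Y1, W1*Z1;
         W1*X1, X1*X1+X2*X2+X3*X3-X4*X4, X1*Y1+X2*Y2+X3*Y3-X4*Y4, X1*Z1+X2*Z2+X3*Z3-X4*Z4;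
         W1*Y1, X1*Y1+X2*Y2+X3*Y3-X4*Y4, Y1*Y1+Y2*Y2+Y3*Y3-Y4*Y4, Y1*Z1+Y2*Z2+Y3*Z3-Y4*Z4;
         W1*Z1, X1*Z1+X2*Z2+X3*Z3-X4*Z4, Y1*Z1+Y2*Z2+Y3*Z3-Y4*Z4, Z1*Z1+Z2*Z2+Z3*Z3-Z4*Z4] := by
  have ht : (!![W1, X1, Y1, Z1; 0, X2, Y2, Z2; 0, X3, Y3, Z3; 0, X4, Y4, Z4] : Matrix (Fin 4) (Fin 4) ℂ).transpose
      = !![W1,0,0,0; X1,X2,X3,X4; Y1,Y2,Y3,Y4; Z1,Z2,Z3,Z4] := by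
    ext i j; fin_cases i <;> fin_cases j <;> rfl
  have hD : (Matrix.diagonal ![1,1,1,-1] : Matrix (Fin 4) (Fin 4) ℂ)
      = !![1,0,0,0; 0,1,0,0; 0,0,1,0; 0,0,0,-1] := by
    ext i j; fin_cases i <;> fin_cases j <;> rfl
  rw [ht, hD]
  ext i j
  fin_cases i <;> fin_cases j <;>
    simp [Matrix.mul_apply, Fin.sum_univ_four]
  all_goals try simp [Matrix.vecHead, Matrix.vecTail]
  all_goals try ring

lemma prod_lit2 (W1 X1 X2 X3 X4 Y1 Y2 Y3 Y4 Z1 Z2 Z3 Z4 : ℂ) :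
    (!![W1, X1, Y1, Z1; 0, X2, Y2, Z2; 0, X3, Y3, Z3; 0, X4, Y4, Z4] : Matrix (Fin 4) (Fin 4) ℂ) * Matrix.diagonal ![-1, 1, 1, 1] * (!![W1, X1, Y1, Z1; 0, X2, Y2, Z2; 0, X3, Y3, Z3; 0, X4, Y4, Z4] : Matrix (Fin 4) (Fin 4) ℂ).transpose
    = !![-(W1*W1)+X1*X1+Y1*Y1+Z1*Z1, X1*X2+Y1*Y2+Z1*Z2, X1*X3+Y1*Y3+Z1*Z3, X1*X4+Y1*Y4+Z1*Z4;
         X1*X2+Y1*Y2+Z1*Z2, X2*X2+Y2*Y2+Z2*Z2, X2*X3+Y2*Y3+Z2*Z3, X2*X4+Y2*Y4+Z2*Z4;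
         X1*X3+Y1*Y3+Z1*Z3, X2*X3+Y2*Y3+Z2*Z3, X3*X3+Y3*Y3+Z3*Z3, X3*X4+Y3*Y4+Z3*Z4;
         X1*X4+Y1*Y4+Z1*Z4, X2*X4+Y2*Y4+Z2*Z4, X3*X4+Y3*Y4+Z3*Z4, X4*X4+Y4*Y4+Z4*Z4] := by
  have ht : (!![W1, X1, Y1, Z1; 0, X2, Y2, Z2; 0, X3, Y3, Z3; 0, X4, Y4, Z4] : Matrix (Fin 4) (Fin 4) ℂ).transpose
      = !![W1,0,0,0; X1,X2,X3,X4; Y1,Y2,Y3,Y4; Z1,Z2,Z3,Z4] := by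
    ext i j; fin_cases i <;> fin_cases j <;> rfl
  have hE : (Matrix.diagonal ![-1,1,1,1] : Matrix (Fin 4) (Fin 4) ℂ)
      = !![-1,0,0,0; 0,1,0,0; 0,0,1,0; 0,0,0,1] := by
    ext i j; fin_cases i <;> fin_cases j <;> rfl
  rw [ht, hE]
  ext i j
  fin_cases i <;> fin_cases j <;>
    simp [Matrix.mul_apply, Fin.sum_univ_four]
  all_goals try simp [Matrix.vecHead, Matrix.vecTail]
  all_goals try ring

lemma matrix_iff (W1 X1 X2 X3 X4 Y1 Y2 Y3 Y4 Z1 Z2 Z3 Z4 : ℂ) :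
    (!![W1, X1, Y1, Z1; 0, X2, Y2, Z2; 0, X3, Y3, Z3; 0, X4, Y4, Z4] : Matrix (Fin 4) (Fin 4) ℂ).transpose * Matrix.diagonal ![1, 1, 1, -1] * !![W1, X1, Y1, Z1; 0, X2, Y2, Z2; 0, X3, Y3, Z3; 0, X4, Y4, Z4] = Matrix.diagonal ![-1, 1, 1, 1]
    ↔ (W1*W1 = -1 ∧ W1*X1 = 0 ∧ W1*Y1 = 0 ∧ W1*Z1 = 0 ∧
       X1*X1+X2*X2+X3*X3-X4*X4 = 1 ∧ X1*Y1+X2*Y2+X3*Y3-X4*Y4 = 0 ∧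
       X1*Z1+X2*Z2+X3*Z3-X4*Z4 = 0 ∧ Y1*Y1+Y2*Y2+Y3*Y3-Y4*Y4 = 1 ∧
       Y1*Z1+Y2*Z2+Y3*Z3-Y4*Z4 = 0 ∧ Z1*Z1+Z2*Z2+Z3*Z3-Z4*Z4 = 1) := by
  have hE : (Matrix.diagonal ![-1,1,1,1] : Matrix (Fin 4) (Fin 4) ℂ)
      = !![-1,0,0,0; 0,1,0,0; 0,0,1,0; 0,0,0,1] := by
    ext i j; fin_cases i <;> fin_cases j <;> rfl
  rw [prod_lit, hE]
  constructor
  · intro h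
    refine ⟨Matrix.ext_iff.2 h 0 0, Matrix.ext_iff.2 h 0 1, Matrix.ext_iff.2 h 0 2,
      Matrix.ext_iff.2 h 0 3, Matrix.ext_iff.2 h 1 1, Matrix.ext_iff.2 h 1 2,
      Matrix.ext_iff.2 h 1 3, Matrix.ext_iff.2 h 2 2, Matrix.ext_iff.2 h 2 3,
      Matrix.ext_iff.2 h 3 3⟩
  · rintro ⟨h1, h2, h3, h4, h5, h6, h7, h8, h9, h10⟩
    ext i j
    fin_cases i <;> fin_cases j <;>
      (first | exact h1 | exact h2 | exact h3 | exact h4 | exact h5 | exact h6 | exact h7 | exact h8 | exact h9 | exact h10)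

lemma gram_iff (W1 X1 X2 X3 X4 Y1 Y2 Y3 Y4 Z1 Z2 Z3 Z4 : ℂ) :
    (!![W1, X1, Y1, Z1; 0, X2, Y2, Z2; 0, X3, Y3, Z3; 0, X4, Y4, Z4] : Matrix (Fin 4) (Fin 4) ℂ) * Matrix.diagonal ![-1, 1, 1, 1] * (!![W1, X1, Y1, Z1; 0, X2, Y2, Z2; 0, X3, Y3, Z3; 0, X4, Y4, Z4] : Matrix (Fin 4) (Fin 4) ℂ).transpose = Matrix.diagonal ![1, 1, 1, -1]
    ↔ (-(W1*W1)+X1*X1+Y1*Y1+Z1*Z1 = 1 ∧ X1*X2+Y1*Y2+Z1*Z2 = 0 ∧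
       X1*X3+Y1*Y3+Z1*Z3 = 0 ∧ X1*X4+Y1*Y4+Z1*Z4 = 0 ∧
       X2*X2+Y2*Y2+Z2*Z2 = 1 ∧ X2*X3+Y2*Y3+Z2*Z3 = 0 ∧
       X2*X4+Y2*Y4+Z2*Z4 = 0 ∧ X3*X3+Y3*Y3+Z3*Z3 = 1 ∧
       X3*X4+Y3*Y4+Z3*Z4 = 0 ∧ X4*X4+Y4*Y4+Z4*Z4 = -1) := by
  have hD : (Matrix.diagonal ![1,1,1,-1] : Matrix (Fin 4) (Fin 4) ℂ)
      = !![1,0,0,0; 0,1,0,0; 0,0,1,0; 0,0,0,-1] := by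
    ext i j; fin_cases i <;> fin_cases j <;> rfl
  rw [prod_lit2, hD]
  constructor
  · intro h
    refine ⟨Matrix.ext_iff.2 h 0 0, Matrix.ext_iff.2 h 0 1, Matrix.ext_iff.2 h 0 2,
      Matrix.ext_iff.2 h 0 3, Matrix.ext_iff.2 h 1 1, Matrix.ext_iff.2 h 1 2,
      Matrix.ext_iff.2 h 1 3, Matrix.ext_iff.2 h 2 2, Matrix.ext_iff.2 h 2 3,
      Matrix.ext_iff.2 h 3 3⟩
  · rintro ⟨h1, h2, h3, h4, h5, h6, h7, h8, h9, h10⟩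
    ext i j
    fin_cases i <;> fin_cases j <;>
      (first | exact h1 | exact h2 | exact h3 | exact h4 | exact h5 | exact h6 | exact h7 | exact h8 | exact h9 | exact h10)

lemma flip_iff (P : Matrix (Fin 4) (Fin 4) ℂ) :
    P.transpose * Matrix.diagonal ![1, 1, 1, -1] * P = Matrix.diagonal ![-1, 1, 1, 1]
    ↔ P * Matrix.diagonal ![-1, 1, 1, 1] * P.transpose = Matrix.diagonal ![1, 1, 1, -1] := by
  set D : Matrix (Fin 4) (Fin 4) ℂ := Matrix.diagonal ![1, 1, 1, -1] with hD
  set E : Matrix (Fin 4) (Fin 4) ℂ := Matrix.diagonal ![-1, 1, 1, 1] with hE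
  have hDD : D * D = 1 := by
    rw [hD, Matrix.diagonal_mul_diagonal]
    have h : (fun i => (![1,1,1,-1] : Fin 4 → ℂ) i * ![1,1,1,-1] i) = fun _ => 1 := by
      funext i; fin_cases i <;> norm_num
    rw [h]
    exact Matrix.diagonal_one
  have hEE : E * E = 1 := by
    rw [hE, Matrix.diagonal_mul_diagonal]
    have h : (fun i => (![-1,1,1,1] : Fin 4 → ℂ) i * ![-1,1,1,1] i) = fun _ => 1 := by
      funext i; fin_cases i <;> norm_num
    rw [h]
    exact Matrix.diagonal_one
  constructor
  · intro h
    have h1 : P.transpose * (D * P * E) = 1 := by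
      rw [← Matrix.mul_assoc, ← Matrix.mul_assoc, h, hEE]
    have h2 : D * P * E * P.transpose = 1 := mul_eq_one_comm.mp h1
    calc P * E * P.transpose = D * (D * P * E * P.transpose) := by
            rw [← Matrix.mul_assoc, ← Matrix.mul_assoc, ← Matrix.mul_assoc, hDD, Matrix.one_mul]
      _ = D := by rw [h2, Matrix.mul_one]
  · intro h
    have h1 : P * (E * P.transpose * D) = 1 := by
      rw [← Matrix.mul_assoc, ← Matrix.mul_assoc, h, hDD]
    have h2 : E * P.transpose * D * P = 1 := mul_eq_one_comm.mp h1
    calc P.transpose * D * P = E * (E * P.transpose * D * P) := by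
            rw [← Matrix.mul_assoc, ← Matrix.mul_assoc, ← Matrix.mul_assoc, hEE, Matrix.one_mul]
      _ = E := by rw [h2, Matrix.mul_one]

/-- Case 16 (pivot columns `{1,3,4,5}`): the span of
`r₁ = e₁ + W₁e₂ + X₁e₆ + Y₁e₇ + Z₁e₈`, `r₂ = e₃ + X₂e₆ + Y₂e₇ + Z₂e₈`,
`r₃ = e₄ + X₃e₆ + Y₃e₇ + Z₃e₈`, `r₄ = e₅ + X₄e₆ + Y₄e₇ + Z₄e₈`
is self-dual if and only if `Pᵀ D P = E` where `P` is the parameter matrix,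
`D = diag(1,1,1,−1)` and `E = diag(−1,1,1,1)`. -/
theorem case16_self_dual_iff (W1 X1 X2 X3 X4 Y1 Y2 Y3 Y4 Z1 Z2 Z3 Z4 : ℂ)
    (R : Submodule ℂ (Fin 8 → ℂ))
    (hR : R = Submodule.span ℂ
        {e 0 + W1 • e 1 + X1 • e 5 + Y1 • e 6 + Z1 • e 7,
         e 2 + X2 • e 5 + Y2 • e 6 + Z2 • e 7,
         e 3 + X3 • e 5 + Y3 • e 6 + Z3 • e 7,
         e 4 + X4 • e 5 + Y4 • e 6 + Z4 • e 7})
    (P : Matrix (Fin 4) (Fin 4) ℂ)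
    (hP : P = !![W1, X1, Y1, Z1; 0, X2, Y2, Z2; 0, X3, Y3, Z3; 0, X4, Y4, Z4]) :
    R = Bperp R ↔
      P.transpose * Matrix.diagonal ![1, 1, 1, -1] * P = Matrix.diagonal ![-1, 1, 1, 1] := by
  subst hR hP
  have m1 : (e 0 + W1 • e 1 + X1 • e 5 + Y1 • e 6 + Z1 • e 7) ∈
      ({e 0 + W1 • e 1 + X1 • e 5 + Y1 • e 6 + Z1 • e 7,
        e 2 + X2 • e 5 + Y2 • e 6 + Z2 • e 7,
        e 3 + X3 • e 5 + Y3 • e 6 + Z3 • e 7,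
        e 4 + X4 • e 5 + Y4 • e 6 + Z4 • e 7} : Set (Fin 8 → ℂ)) := by left; rfl
  have m2 : (e 2 + X2 • e 5 + Y2 • e 6 + Z2 • e 7) ∈
      ({e 0 + W1 • e 1 + X1 • e 5 + Y1 • e 6 + Z1 • e 7,
        e 2 + X2 • e 5 + Y2 • e 6 + Z2 • e 7,
        e 3 + X3 • e 5 + Y3 • e 6 + Z3 • e 7,
        e 4 + X4 • e 5 + Y4 • e 6 + Z4 • e 7} : Set (Fin 8 → ℂ)) := by right; left; rfl
  have m3 : (e 3 + X3 • e 5 + Y3 • e 6 + Z3 • e 7) ∈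
      ({e 0 + W1 • e 1 + X1 • e 5 + Y1 • e 6 + Z1 • e 7,
        e 2 + X2 • e 5 + Y2 • e 6 + Z2 • e 7,
        e 3 + X3 • e 5 + Y3 • e 6 + Z3 • e 7,
        e 4 + X4 • e 5 + Y4 • e 6 + Z4 • e 7} : Set (Fin 8 → ℂ)) := by right; right; left; rfl
  have m4 : (e 4 + X4 • e 5 + Y4 • e 6 + Z4 • e 7) ∈
      ({e 0 + W1 • e 1 + X1 • e 5 + Y1 • e 6 + Z1 • e 7,
        e 2 + X2 • e 5 + Y2 • e 6 + Z2 • e 7,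
        e 3 + X3 • e 5 + Y3 • e 6 + Z3 • e 7,
        e 4 + X4 • e 5 + Y4 • e 6 + Z4 • e 7} : Set (Fin 8 → ℂ)) := by right; right; right; rfl
  constructor
  · -- self-dual → matrix equation
    intro h
    have key : ∀ x ∈ ({e 0 + W1 • e 1 + X1 • e 5 + Y1 • e 6 + Z1 • e 7,
        e 2 + X2 • e 5 + Y2 • e 6 + Z2 • e 7,
        e 3 + X3 • e 5 + Y3 • e 6 + Z3 • e 7,
        e 4 + X4 • e 5 + Y4 • e 6 + Z4 • e 7} : Set (Fin 8 → ℂ)),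
        ∀ y ∈ ({e 0 + W1 • e 1 + X1 • e 5 + Y1 • e 6 + Z1 • e 7,
        e 2 + X2 • e 5 + Y2 • e 6 + Z2 • e 7,
        e 3 + X3 • e 5 + Y3 • e 6 + Z3 • e 7,
        e 4 + X4 • e 5 + Y4 • e 6 + Z4 • e 7} : Set (Fin 8 → ℂ)), Bform x y = 0 := by
      intro x hx y hy
      have hxm : x ∈ Bperp (Submodule.span ℂ
          ({e 0 + W1 • e 1 + X1 • e 5 + Y1 • e 6 + Z1 • e 7,
            e 2 + X2 • e 5 + Y2 • e 6 + Z2 • e 7,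
            e 3 + X3 • e 5 + Y3 • e 6 + Z3 • e 7,
            e 4 + X4 • e 5 + Y4 • e 6 + Z4 • e 7} : Set (Fin 8 → ℂ))) := by
        rw [← h]; exact Submodule.subset_span hx
      exact hxm y (Submodule.subset_span hy)
    have g1 : -(W1*W1)+X1*X1+Y1*Y1+Z1*Z1 = 1 := by
      have t := key _ m1 _ m1
      simp [Bform, e, Pi.single_apply] at t
      first | linear_combination t | linear_combination -t
    have g2 : X1*X2+Y1*Y2+Z1*Z2 = 0 := by
      have t := key _ m1 _ m2
      simp [Bform, e, Pi.single_apply] at t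
      first | linear_combination t | linear_combination -t
    have g3 : X1*X3+Y1*Y3+Z1*Z3 = 0 := by
      have t := key _ m1 _ m3
      simp [Bform, e, Pi.single_apply] at t
      first | linear_combination t | linear_combination -t
    have g4 : X1*X4+Y1*Y4+Z1*Z4 = 0 := by
      have t := key _ m1 _ m4
      simp [Bform, e, Pi.single_apply] at t
      first | linear_combination t | linear_combination -t
    have g5 : X2*X2+Y2*Y2+Z2*Z2 = 1 := by
      have t := key _ m2 _ m2
      simp [Bform, e, Pi.single_apply] at t
      first | linear_combination t | linear_combination -t
    have g6 : X2*X3+Y2*Y3+Z2*Z3 = 0 := by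
      have t := key _ m2 _ m3
      simp [Bform, e, Pi.single_apply] at t
      first | linear_combination t | linear_combination -t
    have g7 : X2*X4+Y2*Y4+Z2*Z4 = 0 := by
      have t := key _ m2 _ m4
      simp [Bform, e, Pi.single_apply] at t
      first | linear_combination t | linear_combination -t
    have g8 : X3*X3+Y3*Y3+Z3*Z3 = 1 := by
      have t := key _ m3 _ m3
      simp [Bform, e, Pi.single_apply] at t
      first | linear_combination t | linear_combination -t
    have g9 : X3*X4+Y3*Y4+Z3*Z4 = 0 := by
      have t := key _ m3 _ m4
      simp [Bform, e, Pi.single_apply] at t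
      first | linear_combination t | linear_combination -t
    have g10 : X4*X4+Y4*Y4+Z4*Z4 = -1 := by
      have t := key _ m4 _ m4
      simp [Bform, e, Pi.single_apply] at t
      first | linear_combination t | linear_combination -t
    exact (flip_iff _).mpr ((gram_iff W1 X1 X2 X3 X4 Y1 Y2 Y3 Y4 Z1 Z2 Z3 Z4).mpr
      ⟨g1, g2, g3, g4, g5, g6, g7, g8, g9, g10⟩)
  · -- matrix equation → self-dual
    intro hM
    obtain ⟨c1, c2, c3, c4, c5, c6, c7, c8, c9, c10⟩ :=
      (matrix_iff W1 X1 X2 X3 X4 Y1 Y2 Y3 Y4 Z1 Z2 Z3 Z4).mp hM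
    obtain ⟨g1, g2, g3, g4, g5, g6, g7, g8, g9, g10⟩ :=
      (gram_iff W1 X1 X2 X3 X4 Y1 Y2 Y3 Y4 Z1 Z2 Z3 Z4).mp ((flip_iff _).mp hM)
    have hW0 : W1 ≠ 0 := by
      intro h0; rw [h0] at c1; norm_num at c1
    have hX1 : X1 = 0 := by
      rcases mul_eq_zero.mp c2 with h | h
      · exact absurd h hW0
      · exact h
    have hY1 : Y1 = 0 := by
      rcases mul_eq_zero.mp c3 with h | h
      · exact absurd h hW0
      · exact h
    have hZ1 : Z1 = 0 := by
      rcases mul_eq_zero.mp c4 with h | h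
      · exact absurd h hW0
      · exact h
    apply le_antisymm
    · -- span ≤ Bperp span
      rw [Submodule.span_le]
      intro s hs
      show s ∈ Bperp (Submodule.span ℂ _)
      rw [bperp_span_iff]
      intro t ht
      simp only [Set.mem_insert_iff, Set.mem_singleton_iff] at hs ht
      rcases hs with rfl | rfl | rfl | rfl <;> rcases ht with rfl | rfl | rfl | rfl <;>
        simp [Bform, e, Pi.single_apply] <;>
          (first | linear_combination g1 | linear_combination -g1
                 | linear_combination g2 | linear_combination -g2
                 | linear_combination g3 | linear_combination -g3
                 | linear_combination g4 | linear_combination -g4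
                 | linear_combination g5 | linear_combination -g5
                 | linear_combination g6 | linear_combination -g6
                 | linear_combination g7 | linear_combination -g7
                 | linear_combination g8 | linear_combination -g8
                 | linear_combination g9 | linear_combination -g9
                 | linear_combination g10 | linear_combination -g10)
    · -- Bperp span ≤ span
      intro v hv
      replace hv := mem_Bperp.mp hv
      have h1 : v 0 + W1 * v 1 - X1 * v 5 - Y1 * v 6 - Z1 * v 7 = 0 := by
        have t := hv _ (Submodule.subset_span m1)
        simp [Bform, e, Pi.single_apply] at t
        linear_combination t
      have h2 : v 2 - X2 * v 5 - Y2 * v 6 - Z2 * v 7 = 0 := by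
        have t := hv _ (Submodule.subset_span m2)
        simp [Bform, e, Pi.single_apply] at t
        linear_combination t
      have h3 : v 3 - X3 * v 5 - Y3 * v 6 - Z3 * v 7 = 0 := by
        have t := hv _ (Submodule.subset_span m3)
        simp [Bform, e, Pi.single_apply] at t
        linear_combination t
      have h4 : -(v 4) - X4 * v 5 - Y4 * v 6 - Z4 * v 7 = 0 := by
        have t := hv _ (Submodule.subset_span m4)
        simp [Bform, e, Pi.single_apply] at t
        linear_combination t
      have hveq : v = v 0 • (e 0 + W1 • e 1 + X1 • e 5 + Y1 • e 6 + Z1 • e 7)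
          + v 2 • (e 2 + X2 • e 5 + Y2 • e 6 + Z2 • e 7)
          + v 3 • (e 3 + X3 • e 5 + Y3 • e 6 + Z3 • e 7)
          + v 4 • (e 4 + X4 • e 5 + Y4 • e 6 + Z4 • e 7) := by
        funext k
        fin_cases k <;> simp [e, Pi.single_apply] <;>
          (first
            | linear_combination (-W1) * h1 + (v 1) * c1 - (v 5) * c2 - (v 6) * c3 - (v 7) * c4
            | linear_combination (-X1) * h1 - X2 * h2 - X3 * h3 + X4 * h4 - (v 5) * c5 - (v 6) * c6 - (v 7) * c7 + (v 1) * c2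
            | linear_combination (-Y1) * h1 - Y2 * h2 - Y3 * h3 + Y4 * h4 - (v 5) * c6 - (v 6) * c8 - (v 7) * c9 + (v 1) * c3
            | linear_combination (-Z1) * h1 - Z2 * h2 - Z3 * h3 + Z4 * h4 - (v 5) * c7 - (v 6) * c9 - (v 7) * c10 + (v 1) * c4
            | linear_combination h1
            | skip)
      rw [hveq]
      exact Submodule.add_mem _ (Submodule.add_mem _ (Submodule.add_mem _
        (Submodule.smul_mem _ _ (Submodule.subset_span m1))
        (Submodule.smul_mem _ _ (Submodule.subset_span m2)))
        (Submodule.smul_mem _ _ (Submodule.subset_span m3)))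
        (Submodule.smul_mem _ _ (Submodule.subset_span m4))
end
end

section
/- Let B be the symmetric bilinear form on ℂ^8 defined by B(u,v) = u_1v_1 + u_2v_2 + u_3v_3 + u_4v_4 − u_5v_5 − u_6v_6 − u_7v_7 − u_8v_8. Fix W_1, X_1, X_2, Y_1, Y_2, Y_3, Z_1, Z_2, Z_3, Z_4 ∈ ℂ and let R ⊆ ℂ^8 be the span of r_1 = e_1 + W_1 e_2 + X_1 e_4 + Y_1 e_6 + Z_1 e_8, r_2 = e_3 + X_2 e_4 + Y_2 e_6 + Z_2 e_8, r_3 = e_5 + Y_3 e_6 + Z_3 e_8, r_4 = e_7 + Z_4 e_8. Then R = R^± if and only if X_1 = Y_1 = Z_1 = Y_2 = Z_2 = Z_3 = 0 and W_1² = X_2² = Y_3² = Z_4² = −1. -/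
noncomputable section

lemma fin8_mk0 (h : 0 < 8) : (⟨0, h⟩ : Fin 8) = 0 := rfl
lemma fin8_mk1 (h : 1 < 8) : (⟨1, h⟩ : Fin 8) = 1 := rfl
lemma fin8_mk2 (h : 2 < 8) : (⟨2, h⟩ : Fin 8) = 2 := rfl
lemma fin8_mk3 (h : 3 < 8) : (⟨3, h⟩ : Fin 8) = 3 := rfl
lemma fin8_mk4 (h : 4 < 8) : (⟨4, h⟩ : Fin 8) = 4 := rfl
lemma fin8_mk5 (h : 5 < 8) : (⟨5, h⟩ : Fin 8) = 5 := rfl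
lemma fin8_mk6 (h : 6 < 8) : (⟨6, h⟩ : Fin 8) = 6 := rfl
lemma fin8_mk7 (h : 7 < 8) : (⟨7, h⟩ : Fin 8) = 7 := rfl

lemma bform_span {v : Fin 8 → ℂ} {S : Set (Fin 8 → ℂ)} (h : ∀ s ∈ S, Bform v s = 0) :
    ∀ r ∈ Submodule.span ℂ S, Bform v r = 0 := by
  intro r hr
  induction hr using Submodule.span_induction with
  | mem s hs => exact h s hs
  | zero => simp [Bform]
  | add a b _ _ ha hb => simp only [Bform, Pi.add_apply] at *; linear_combination ha + hb
  | smul c a _ ha => simp only [Bform, Pi.smul_apply, smul_eq_mul] at *; linear_combination c * ha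

/-- Case 21 (pivot columns `{1,3,5,7}`): the span of
`r₁ = e₁ + W₁e₂ + X₁e₄ + Y₁e₆ + Z₁e₈`, `r₂ = e₃ + X₂e₄ + Y₂e₆ + Z₂e₈`,
`r₃ = e₅ + Y₃e₆ + Z₃e₈`, `r₄ = e₇ + Z₄e₈` is self-dual if and only if
`X₁ = Y₁ = Z₁ = Y₂ = Z₂ = Z₃ = 0` and `W₁² = X₂² = Y₃² = Z₄² = −1`. -/
theorem case21_self_dual_iff (W1 X1 X2 Y1 Y2 Y3 Z1 Z2 Z3 Z4 : ℂ)
    (R : Submodule ℂ (Fin 8 → ℂ))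
    (hR : R = Submodule.span ℂ
        {e 0 + W1 • e 1 + X1 • e 3 + Y1 • e 5 + Z1 • e 7,
         e 2 + X2 • e 3 + Y2 • e 5 + Z2 • e 7,
         e 4 + Y3 • e 5 + Z3 • e 7,
         e 6 + Z4 • e 7}) :
    R = Bperp R ↔
      (X1 = 0 ∧ Y1 = 0 ∧ Z1 = 0 ∧ Y2 = 0 ∧ Z2 = 0 ∧ Z3 = 0 ∧
        W1 ^ 2 = -1 ∧ X2 ^ 2 = -1 ∧ Y3 ^ 2 = -1 ∧ Z4 ^ 2 = -1) := by
  have m1 : (e 0 + W1 • e 1 + X1 • e 3 + Y1 • e 5 + Z1 • e 7) ∈ R := by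
    rw [hR]; exact Submodule.subset_span (Set.mem_insert _ _)
  have m2 : (e 2 + X2 • e 3 + Y2 • e 5 + Z2 • e 7) ∈ R := by
    rw [hR]
    exact Submodule.subset_span (Set.mem_insert_of_mem _ (Set.mem_insert _ _))
  have m3 : (e 4 + Y3 • e 5 + Z3 • e 7) ∈ R := by
    rw [hR]
    exact Submodule.subset_span
      (Set.mem_insert_of_mem _ (Set.mem_insert_of_mem _ (Set.mem_insert _ _)))
  have m4 : (e 6 + Z4 • e 7) ∈ R := by
    rw [hR]
    exact Submodule.subset_span
      (Set.mem_insert_of_mem _ (Set.mem_insert_of_mem _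
        (Set.mem_insert_of_mem _ rfl)))
  constructor
  · intro h
    have hp : ∀ u ∈ R, ∀ w ∈ R, Bform u w = 0 := by
      intro u hu w hw
      exact mem_Bperp.mp (h ▸ hu) w hw
    have h11 := hp _ m1 _ m1
    have h12 := hp _ m1 _ m2
    have h13 := hp _ m1 _ m3
    have h14 := hp _ m1 _ m4
    have h22 := hp _ m2 _ m2
    have h23 := hp _ m2 _ m3
    have h24 := hp _ m2 _ m4
    have h33 := hp _ m3 _ m3
    have h34 := hp _ m3 _ m4
    have h44 := hp _ m4 _ m4
    simp (config := { decide := true }) only [Bform, e, Pi.single_apply, Pi.add_apply,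
      Pi.smul_apply, smul_eq_mul, if_true, if_false] at h11 h12 h13 h14 h22 h23 h24 h33 h34 h44
    have hZ4 : Z4 ^ 2 = -1 := by linear_combination -h44
    have hZ4ne : Z4 ≠ 0 := by
      intro h0; rw [h0] at hZ4; norm_num at hZ4
    have hZ3 : Z3 = 0 := by
      have hz : Z3 * Z4 = 0 := by linear_combination -h34
      rcases mul_eq_zero.mp hz with h' | h'
      · exact h'
      · exact absurd h' hZ4ne
    have hZ2 : Z2 = 0 := by
      have hz : Z2 * Z4 = 0 := by linear_combination -h24
      rcases mul_eq_zero.mp hz with h' | h'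
      · exact h'
      · exact absurd h' hZ4ne
    have hZ1 : Z1 = 0 := by
      have hz : Z1 * Z4 = 0 := by linear_combination -h14
      rcases mul_eq_zero.mp hz with h' | h'
      · exact h'
      · exact absurd h' hZ4ne
    have hY3 : Y3 ^ 2 = -1 := by linear_combination -h33 - Z3 * hZ3
    have hY3ne : Y3 ≠ 0 := by
      intro h0; rw [h0] at hY3; norm_num at hY3
    have hY2 : Y2 = 0 := by
      have hy : Y2 * Y3 = 0 := by linear_combination -h23 - Z2 * hZ3
      rcases mul_eq_zero.mp hy with h' | h'
      · exact h'
      · exact absurd h' hY3ne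
    have hY1 : Y1 = 0 := by
      have hy : Y1 * Y3 = 0 := by linear_combination -h13 - Z1 * hZ3
      rcases mul_eq_zero.mp hy with h' | h'
      · exact h'
      · exact absurd h' hY3ne
    have hX2 : X2 ^ 2 = -1 := by linear_combination h22 + Y2 * hY2 + Z2 * hZ2
    have hX2ne : X2 ≠ 0 := by
      intro h0; rw [h0] at hX2; norm_num at hX2
    have hX1 : X1 = 0 := by
      have hx : X1 * X2 = 0 := by linear_combination h12 + Y1 * hY2 + Z1 * hZ2
      rcases mul_eq_zero.mp hx with h' | h'
      · exact h'
      · exact absurd h' hX2ne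
    have hW1 : W1 ^ 2 = -1 := by
      linear_combination h11 - X1 * hX1 + Y1 * hY1 + Z1 * hZ1
    exact ⟨hX1, hY1, hZ1, hY2, hZ2, hZ3, hW1, hX2, hY3, hZ4⟩
  · rintro ⟨hX1, hY1, hZ1, hY2, hZ2, hZ3, hW1, hX2, hY3, hZ4⟩
    subst hX1; subst hY1; subst hZ1; subst hY2; subst hZ2; subst hZ3
    apply le_antisymm
    · rw [hR, Submodule.span_le]
      intro s hs
      rw [SetLike.mem_coe, mem_Bperp]
      intro r hr
      refine bform_span ?_ r hr
      intro t ht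
      simp only [Set.mem_insert_iff, Set.mem_singleton_iff] at hs ht
      rcases hs with rfl | rfl | rfl | rfl <;> rcases ht with rfl | rfl | rfl | rfl <;>
        simp (config := { decide := true }) only [Bform, e, Pi.single_apply, Pi.add_apply,
          Pi.smul_apply, smul_eq_mul, if_true, if_false] <;>
        first
          | linear_combination
          | linear_combination hW1
          | linear_combination hX2
          | linear_combination hY3
          | linear_combination hZ4
          | linear_combination -hY3
          | linear_combination -hZ4
    · intro v hv
      have e1 := mem_Bperp.mp hv _ m1
      have e2 := mem_Bperp.mp hv _ m2
      have e3 := mem_Bperp.mp hv _ m3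
      have e4 := mem_Bperp.mp hv _ m4
      simp (config := { decide := true }) only [Bform, e, Pi.single_apply, Pi.add_apply,
        Pi.smul_apply, smul_eq_mul, if_true, if_false] at e1 e2 e3 e4
      have hkey : v = v 0 • (e 0 + W1 • e 1 + (0:ℂ) • e 3 + (0:ℂ) • e 5 + (0:ℂ) • e 7)
          + v 2 • (e 2 + X2 • e 3 + (0:ℂ) • e 5 + (0:ℂ) • e 7)
          + v 4 • (e 4 + Y3 • e 5 + (0:ℂ) • e 7)
          + v 6 • (e 6 + Z4 • e 7) := by
        funext i
        fin_cases i <;>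
          simp (config := { decide := true }) only [Bform, e, Pi.single_apply, Pi.add_apply,
            Pi.smul_apply, smul_eq_mul, if_true, if_false, fin8_mk0, fin8_mk1, fin8_mk2,
            fin8_mk3, fin8_mk4, fin8_mk5, fin8_mk6, fin8_mk7] <;>
          first
            | linear_combination
            | linear_combination (-W1) * e1 + v 1 * hW1
            | linear_combination (-X2) * e2 + v 3 * hX2
            | linear_combination Y3 * e3 + v 5 * hY3
            | linear_combination Z4 * e4 + v 7 * hZ4
      rw [hR, hkey]
      refine Submodule.add_mem _ (Submodule.add_mem _ (Submodule.add_mem _ ?_ ?_) ?_) ?_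
      · exact Submodule.smul_mem _ _ (Submodule.subset_span (Set.mem_insert _ _))
      · exact Submodule.smul_mem _ _
          (Submodule.subset_span (Set.mem_insert_of_mem _ (Set.mem_insert _ _)))
      · exact Submodule.smul_mem _ _
          (Submodule.subset_span (Set.mem_insert_of_mem _
            (Set.mem_insert_of_mem _ (Set.mem_insert _ _))))
      · exact Submodule.smul_mem _ _
          (Submodule.subset_span (Set.mem_insert_of_mem _
            (Set.mem_insert_of_mem _ (Set.mem_insert_of_mem _ rfl))))
end
end

section
/- Let B be the symmetric bilinear form on ℂ^8 defined by B(u,v) = u_1v_1 + u_2v_2 + u_3v_3 + u_4v_4 − u_5v_5 − u_6v_6 − u_7v_7 − u_8v_8. Let R be a 4-dimensional subspace of ℂ^8 containing both e_1 − e_5 and e_4 − e_8 (the associativity relations of the two operations). Then R = R^± if and only if either (i) there exist a, b, c, d ∈ ℂ with a² + b² = 1, c² + d² = 1, and a c + b d = 0 such that R is the span of e_1 − e_5, e_2 + a e_6 + b e_7, e_3 + c e_6 + d e_7, e_4 − e_8; or (ii) there exist ε, ε' ∈ {1, −1} such that R is the span of e_1 − e_5, e_2 + ε i e_3, e_4 −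 e_8, e_6 + ε' i e_7. -/
noncomputable section

/-!
If pairwise `B`-orthogonal vectors `s` are such that every vector orthogonal to `s` lies in
`span s`, then `span s` is self-dual; for both families this is a direct computation (for (i)
using that a `2 × 2` matrix with orthonormal rows has orthonormal columns). Conversely, let `B`
vanish on `R`; orthogonality to `e 0 - e 4` and `e 3 - e 7` gives `r 4 = -r 0` and
`r 7 = -r 3` on `R`. If the coordinates `0, …, 3` determine the vectors of `R`, they map `R`
onto `ℂ⁴`, so `R` contains vectors `e 1 + a • e 5 + b • e 6` and `e 2 + c • e 5 + d • e 6`,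
whose isotropy is (i). Otherwise a nonzero vector of `R` is supported on coordinates `5, 6`,
hence, being isotropic, a multiple of `e 5 ± i • e 6`; then `r 1 ^ 2 + r 2 ^ 2 = 0` on `R`, and
a vector of `R` with `r 1 ≠ 0`, which exists for dimension reasons, gives `e 1 ± i • e 2`. In
both cases the four vectors `s` found satisfy `R ≤ Bperp R ≤ Bperp (span s) ≤ span s ≤ R`.
-/

section Coordinates

variable {K : Type*} [Field K] {n m : ℕ}

lemma funLeft_comp_subtype_injective (R : Submodule K (Fin n → K)) (f : Fin m → Fin n)
    (hdet : ∀ r ∈ R, (∀ i, r (f i) = 0) → r = 0) :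
    Function.Injective (LinearMap.funLeft K K f ∘ₗ R.subtype) := by
  rw [← LinearMap.ker_eq_bot, Submodule.eq_bot_iff]
  rintro ⟨r, hr⟩ hker
  exact Subtype.ext (hdet r hr fun i => congrFun hker i)

lemma finrank_le_of_coords_determine (R : Submodule K (Fin n → K)) (f : Fin m → Fin n)
    (hdet : ∀ r ∈ R, (∀ i, r (f i) = 0) → r = 0) : Module.finrank K R ≤ m := by
  simpa using LinearMap.finrank_le_finrank_of_injective (funLeft_comp_subtype_injective R f hdet)

lemma exists_mem_coords_eq (R : Submodule K (Fin n → K)) (f : Fin m → Fin n)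
    (hdim : Module.finrank K R = m) (hdet : ∀ r ∈ R, (∀ i, r (f i) = 0) → r = 0)
    (x : Fin m → K) : ∃ r ∈ R, ∀ i, r (f i) = x i := by
  obtain ⟨⟨r, hr⟩, hrx⟩ := (LinearMap.injective_iff_surjective_of_finrank_eq_finrank
    (by simp [hdim])).1 (funLeft_comp_subtype_injective R f hdet) x
  exact ⟨r, hr, fun i => congrFun hrx i⟩

end Coordinates

lemma Complex.sq_add_sq_eq_zero_iff (x y : ℂ) :
    x ^ 2 + y ^ 2 = 0 ↔ ∃ ε : ℂ, (ε = 1 ∨ ε = -1) ∧ y = ε * I * x := by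
  constructor
  · intro h
    have : (y - I * x) * (y + I * x) = 0 := by linear_combination h - x ^ 2 * I_sq
    rcases mul_eq_zero.1 this with h' | h'
    · exact ⟨1, .inl rfl, by linear_combination h'⟩
    · exact ⟨-1, .inr rfl, by linear_combination h'⟩
  · rintro ⟨ε, rfl | rfl, rfl⟩ <;> linear_combination x ^ 2 * I_sq

lemma fin_two_columns_orthonormal_of_rows {a b c d : ℂ}
    (hab : a ^ 2 + b ^ 2 = 1) (hcd : c ^ 2 + d ^ 2 = 1) (hacbd : a * c + b * d = 0) :
    a ^ 2 + c ^ 2 = 1 ∧ b ^ 2 + d ^ 2 = 1 ∧ a * b + c * d = 0 := by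
  have hrows : !![a, b; c, d] * (!![a, b; c, d]).transpose = 1 := by
    ext i j
    fin_cases i <;> fin_cases j <;>
      simp [Matrix.mul_apply, ← sq, hab, hcd, hacbd, mul_comm c a, mul_comm d b]
  have hcols : (!![a, b; c, d]).transpose * !![a, b; c, d] = 1 := mul_eq_one_comm.1 hrows
  exact ⟨by simpa [Matrix.mul_apply, ← sq] using congrFun₂ hcols 0 0,
    by simpa [Matrix.mul_apply, ← sq] using congrFun₂ hcols 1 1,
    by simpa [Matrix.mul_apply, mul_comm] using congrFun₂ hcols 0 1⟩

lemma mem_Bperp_span_iff {s : Set (Fin 8 → ℂ)} {v : Fin 8 → ℂ} :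
    v ∈ Bperp (Submodule.span ℂ s) ↔ ∀ r ∈ s, Bform v r = 0 := by
  refine ⟨fun hv r hr => hv r (Submodule.subset_span hr), fun hv r hr => ?_⟩
  induction hr using Submodule.span_induction with
  | mem x hx => exact hv x hx
  | zero => simp [Bform]
  | add x y _ _ hx hy =>
    simp only [Bform, Pi.add_apply] at hx hy ⊢
    linear_combination hx + hy
  | smul c x _ hx =>
    simp only [Bform, Pi.smul_apply, smul_eq_mul] at hx ⊢
    linear_combination c * hx

lemma Bperp_anti {R S : Submodule ℂ (Fin 8 → ℂ)} (h : R ≤ S) : Bperp S ≤ Bperp R :=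
  fun _ hv r hr => hv r (h hr)

lemma span_eq_Bperp_span {s : Set (Fin 8 → ℂ)} (horth : ∀ u ∈ s, ∀ v ∈ s, Bform u v = 0)
    (hcompl : Bperp (Submodule.span ℂ s) ≤ Submodule.span ℂ s) :
    Submodule.span ℂ s = Bperp (Submodule.span ℂ s) :=
  le_antisymm (Submodule.span_le.2 fun u hu => mem_Bperp_span_iff.2 (horth u hu)) hcompl

lemma eq_span_of_le_Bperp {R : Submodule ℂ (Fin 8 → ℂ)} {s : Set (Fin 8 → ℂ)}
    (hiso : R ≤ Bperp R) (hs : s ⊆ R)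
    (hcompl : Bperp (Submodule.span ℂ s) ≤ Submodule.span ℂ s) :
    R = Submodule.span ℂ s :=
  le_antisymm (hiso.trans ((Bperp_anti (Submodule.span_le.2 hs)).trans hcompl))
    (Submodule.span_le.2 hs)

lemma mem_span_four_of_eq {K M : Type*} [Semiring K] [AddCommMonoid M] [Module K M]
    {g₁ g₂ g₃ g₄ v : M} {c₁ c₂ c₃ c₄ : K}
    (hv : v = c₁ • g₁ + c₂ • g₂ + c₃ • g₃ + c₄ • g₄) :
    v ∈ Submodule.span K {g₁, g₂, g₃, g₄} := by
  rw [hv]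
  refine add_mem (add_mem (add_mem ?_ ?_) ?_) ?_ <;>
    exact Submodule.smul_mem _ _ (Submodule.subset_span (by simp))

def graphRelations (a b c d : ℂ) : Set (Fin 8 → ℂ) :=
  {e 0 - e 4, e 1 + a • e 5 + b • e 6, e 2 + c • e 5 + d • e 6, e 3 - e 7}

def isotropicRelations (ε ε' : ℂ) : Set (Fin 8 → ℂ) :=
  {e 0 - e 4, e 1 + (ε * Complex.I) • e 2, e 3 - e 7, e 5 + (ε' * Complex.I) • e 6}

section GraphRelations

variable {a b c d : ℂ}

lemma graphRelations_orthogonal (hab : a ^ 2 + b ^ 2 = 1) (hcd : c ^ 2 + d ^ 2 = 1)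
    (hacbd : a * c + b * d = 0) :
    ∀ u ∈ graphRelations a b c d, ∀ v ∈ graphRelations a b c d, Bform u v = 0 := by
  simp only [graphRelations, Set.mem_insert_iff, Set.mem_singleton_iff]
  rintro u (rfl | rfl | rfl | rfl) v (rfl | rfl | rfl | rfl) <;>
    simp [Bform, e] <;> grind

lemma Bperp_span_graphRelations_le (hab : a ^ 2 + b ^ 2 = 1) (hcd : c ^ 2 + d ^ 2 = 1)
    (hacbd : a * c + b * d = 0) :
    Bperp (Submodule.span ℂ (graphRelations a b c d)) ≤
      Submodule.span ℂ (graphRelations a b c d) := by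
  intro v hv
  obtain ⟨h0, h1, h2, h3⟩ : v 0 + v 4 = 0 ∧ v 1 - v 5 * a - v 6 * b = 0 ∧
      v 2 - v 5 * c - v 6 * d = 0 ∧ v 3 + v 7 = 0 := by
    simpa [mem_Bperp_span_iff, graphRelations, Bform, e] using hv
  obtain ⟨hac, hbd, habcd⟩ := fin_two_columns_orthonormal_of_rows hab hcd hacbd
  refine mem_span_four_of_eq (c₁ := v 0) (c₂ := v 1) (c₃ := v 2) (c₄ := v 3) ?_
  funext j
  fin_cases j <;> simp [e] <;> grind

lemma span_graphRelations_eq_Bperp (hab : a ^ 2 + b ^ 2 = 1) (hcd : c ^ 2 + d ^ 2 = 1)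
    (hacbd : a * c + b * d = 0) :
    Submodule.span ℂ (graphRelations a b c d) =
      Bperp (Submodule.span ℂ (graphRelations a b c d)) :=
  span_eq_Bperp_span (graphRelations_orthogonal hab hcd hacbd)
    (Bperp_span_graphRelations_le hab hcd hacbd)

end GraphRelations

section IsotropicRelations

variable {ε ε' : ℂ}

lemma isotropicRelations_orthogonal (hε : ε = 1 ∨ ε = -1) (hε' : ε' = 1 ∨ ε' = -1) :
    ∀ u ∈ isotropicRelations ε ε', ∀ v ∈ isotropicRelations ε ε', Bform u v = 0 := by
  simp only [isotropicRelations, Set.mem_insert_iff, Set.mem_singleton_iff]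
  rcases hε with rfl | rfl <;> rcases hε' with rfl | rfl <;>
    rintro u (rfl | rfl | rfl | rfl) v (rfl | rfl | rfl | rfl) <;> simp [Bform, e]

lemma Bperp_span_isotropicRelations_le (hε : ε = 1 ∨ ε = -1) (hε' : ε' = 1 ∨ ε' = -1) :
    Bperp (Submodule.span ℂ (isotropicRelations ε ε')) ≤
      Submodule.span ℂ (isotropicRelations ε ε') := by
  intro v hv
  obtain ⟨h0, h1, h3, h5⟩ : v 0 + v 4 = 0 ∧ v 1 + v 2 * (ε * Complex.I) = 0 ∧
      v 3 + v 7 = 0 ∧ -v 5 - v 6 * (ε' * Complex.I) = 0 := by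
    simpa [mem_Bperp_span_iff, isotropicRelations, Bform, e] using hv
  have hε2 : ε ^ 2 = 1 := by rcases hε with rfl | rfl <;> norm_num
  have hε'2 : ε' ^ 2 = 1 := by rcases hε' with rfl | rfl <;> norm_num
  refine mem_span_four_of_eq (c₁ := v 0) (c₂ := v 1) (c₃ := v 3) (c₄ := v 5) ?_
  funext j
  fin_cases j <;> simp [e] <;> grind [Complex.I_sq]

lemma span_isotropicRelations_eq_Bperp (hε : ε = 1 ∨ ε = -1) (hε' : ε' = 1 ∨ ε' = -1) :
    Submodule.span ℂ (isotropicRelations ε ε') =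
      Bperp (Submodule.span ℂ (isotropicRelations ε ε')) :=
  span_eq_Bperp_span (isotropicRelations_orthogonal hε hε')
    (Bperp_span_isotropicRelations_le hε hε')

end IsotropicRelations

section Isotropic

variable {R : Submodule ℂ (Fin 8 → ℂ)} {r : Fin 8 → ℂ}

lemma apply_four_eq_neg_apply_zero (hiso : R ≤ Bperp R) (h1 : e 0 - e 4 ∈ R) (hr : r ∈ R) :
    r 4 = -r 0 := by
  have h : r 0 + r 4 = 0 := by simpa [Bform, e] using hiso hr _ h1
  linear_combination h

lemma apply_seven_eq_neg_apply_three (hiso : R ≤ Bperp R) (h2 : e 3 - e 7 ∈ R) (hr : r ∈ R) :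
    r 7 = -r 3 := by
  have h : r 3 + r 7 = 0 := by simpa [Bform, e] using hiso hr _ h2
  linear_combination h

lemma exists_graphRelations (hdim : Module.finrank ℂ R = 4) (h1 : e 0 - e 4 ∈ R)
    (h2 : e 3 - e 7 ∈ R) (hiso : R ≤ Bperp R)
    (hdet : ∀ t ∈ R, (∀ i, t (![0, 1, 2, 3] i) = 0) → t = 0) :
    ∃ a b c d : ℂ, a ^ 2 + b ^ 2 = 1 ∧ c ^ 2 + d ^ 2 = 1 ∧ a * c + b * d = 0 ∧
      R = Submodule.span ℂ (graphRelations a b c d) := by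
  have row_mem (k : Fin 4) (hk : k = 1 ∨ k = 2) :
      ∃ a b : ℂ, e (![0, 1, 2, 3] k) + a • e 5 + b • e 6 ∈ R := by
    obtain ⟨s, hs, hsk⟩ := exists_mem_coords_eq R _ hdim hdet (Pi.single k 1)
    have h4 := apply_four_eq_neg_apply_zero hiso h1 hs
    have h7 := apply_seven_eq_neg_apply_three hiso h2 hs
    refine ⟨s 5, s 6, ?_⟩
    convert hs using 1
    rcases hk with rfl | rfl <;> funext j <;> fin_cases j <;>
      simp [e, Pi.single_apply, Fin.forall_fin_succ] at hsk ⊢ <;> grind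
  obtain ⟨a, b, hrow₁⟩ := row_mem 1 (.inl rfl)
  obtain ⟨c, d, hrow₂⟩ := row_mem 2 (.inr rfl)
  have hab : a ^ 2 + b ^ 2 = 1 := by
    have h : 1 - a * a - b * b = 0 := by simpa [Bform, e] using hiso hrow₁ _ hrow₁
    linear_combination -h
  have hcd : c ^ 2 + d ^ 2 = 1 := by
    have h : 1 - c * c - d * d = 0 := by simpa [Bform, e] using hiso hrow₂ _ hrow₂
    linear_combination -h
  have hacbd : a * c + b * d = 0 := by
    have h : -(a * c) - b * d = 0 := by simpa [Bform, e] using hiso hrow₁ _ hrow₂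
    linear_combination -h
  refine ⟨a, b, c, d, hab, hcd, hacbd, eq_span_of_le_Bperp hiso ?_
    (Bperp_span_graphRelations_le hab hcd hacbd)⟩
  simp only [graphRelations, Set.insert_subset_iff, Set.singleton_subset_iff]
  exact ⟨h1, hrow₁, hrow₂, h2⟩

lemma exists_e5_add_I_smul_e6_mem (h1 : e 0 - e 4 ∈ R) (h2 : e 3 - e 7 ∈ R)
    (hiso : R ≤ Bperp R) {t : Fin 8 → ℂ} (ht : t ∈ R) (ht0 : ∀ i, t (![0, 1, 2, 3] i) = 0)
    (hne : t ≠ 0) :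
    ∃ ε' : ℂ, (ε' = 1 ∨ ε' = -1) ∧ e 5 + (ε' * Complex.I) • e 6 ∈ R := by
  have h4 := apply_four_eq_neg_apply_zero hiso h1 ht
  have h7 := apply_seven_eq_neg_apply_three hiso h2 ht
  obtain ⟨t0, t1, t2, t3⟩ : t 0 = 0 ∧ t 1 = 0 ∧ t 2 = 0 ∧ t 3 = 0 := by
    simpa [Fin.forall_fin_succ] using ht0
  have htt : Bform t t = 0 := hiso ht t ht
  simp only [Bform, t0, t1, t2, t3, h4, h7] at htt
  obtain ⟨ε', hε', h6⟩ :=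
    (Complex.sq_add_sq_eq_zero_iff (t 5) (t 6)).1 (by linear_combination -htt)
  have ht_eq : t = t 5 • (e 5 + (ε' * Complex.I) • e 6) := by
    funext j
    fin_cases j <;> simp [e, t0, t1, t2, t3, h4, h7, h6, mul_comm]
  have ht5 : t 5 ≠ 0 := fun h => hne (by rw [ht_eq, h, zero_smul])
  exact ⟨ε', hε', (Submodule.smul_mem_iff _ ht5).1 (ht_eq ▸ ht)⟩

lemma exists_e1_add_I_smul_e2_mem (hdim : Module.finrank ℂ R = 4) (h1 : e 0 - e 4 ∈ R)
    (h2 : e 3 - e 7 ∈ R) (hiso : R ≤ Bperp R) {ε' : ℂ} (hε' : ε' = 1 ∨ ε' = -1)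
    (hline : e 5 + (ε' * Complex.I) • e 6 ∈ R) :
    ∃ ε : ℂ, (ε = 1 ∨ ε = -1) ∧ e 1 + (ε * Complex.I) • e 2 ∈ R := by
  have hε'2 : ε' ^ 2 = 1 := by rcases hε' with rfl | rfl <;> norm_num
  have h4 {r} (hr : r ∈ R) := apply_four_eq_neg_apply_zero hiso h1 hr
  have h7 {r} (hr : r ∈ R) := apply_seven_eq_neg_apply_three hiso h2 hr
  have h5 {r} (hr : r ∈ R) : r 5 = -(ε' * Complex.I) * r 6 := by
    have h : -r 5 - r 6 * (ε' * Complex.I) = 0 := by simpa [Bform, e] using hiso hr _ hline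
    linear_combination -h
  have hnull {r} (hr : r ∈ R) : r 1 ^ 2 + r 2 ^ 2 = 0 := by
    have h : Bform r r = 0 := hiso hr r hr
    simp only [Bform, h4 hr, h7 hr, h5 hr] at h
    linear_combination h + (Complex.I ^ 2 * r 6 ^ 2) * hε'2 + r 6 ^ 2 * Complex.I_sq
  -- Otherwise `hnull` forces `r 2 = 0` as well, and `r 0, r 3, r 6` determine `r ∈ R`.
  obtain ⟨s, hs, hs1⟩ : ∃ s ∈ R, s 1 ≠ 0 := by
    by_contra! h
    have hdet (r) (hr : r ∈ R) (h036 : ∀ i, r (![0, 3, 6] i) = 0) : r = 0 := by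
      have h12 : r 2 = 0 := by simpa [h r hr] using hnull hr
      obtain ⟨r0, r3, r6⟩ : r 0 = 0 ∧ r 3 = 0 ∧ r 6 = 0 := by
        simpa [Fin.forall_fin_succ] using h036
      funext j
      fin_cases j <;> simp [h r hr, h12, h4 hr, h7 hr, h5 hr, r0, r3, r6]
    have := finrank_le_of_coords_determine R _ hdet
    omega
  obtain ⟨ε, hε, h2s⟩ := (Complex.sq_add_sq_eq_zero_iff (s 1) (s 2)).1 (hnull hs)
  refine ⟨ε, hε, (Submodule.smul_mem_iff _ hs1).1 ?_⟩
  have hs_eq : s 1 • (e 1 + (ε * Complex.I) • e 2) =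
      s - s 0 • (e 0 - e 4) - s 3 • (e 3 - e 7)
        - s 5 • (e 5 + (ε' * Complex.I) • e 6) := by
    funext j
    fin_cases j <;> simp [e, h4 hs, h7 hs, h5 hs, h2s] <;> grind [Complex.I_sq]
  rw [hs_eq]
  exact sub_mem (sub_mem (sub_mem hs (R.smul_mem _ h1)) (R.smul_mem _ h2)) (R.smul_mem _ hline)

lemma exists_isotropicRelations (hdim : Module.finrank ℂ R = 4) (h1 : e 0 - e 4 ∈ R)
    (h2 : e 3 - e 7 ∈ R) (hiso : R ≤ Bperp R) {t : Fin 8 → ℂ} (ht : t ∈ R)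
    (ht0 : ∀ i, t (![0, 1, 2, 3] i) = 0) (hne : t ≠ 0) :
    ∃ ε ε' : ℂ, (ε = 1 ∨ ε = -1) ∧ (ε' = 1 ∨ ε' = -1) ∧
      R = Submodule.span ℂ (isotropicRelations ε ε') := by
  obtain ⟨ε', hε', hline'⟩ := exists_e5_add_I_smul_e6_mem h1 h2 hiso ht ht0 hne
  obtain ⟨ε, hε, hline⟩ := exists_e1_add_I_smul_e2_mem hdim h1 h2 hiso hε' hline'
  refine ⟨ε, ε', hε, hε', eq_span_of_le_Bperp hiso ?_
    (Bperp_span_isotropicRelations_le hε hε')⟩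
  simp only [isotropicRelations, Set.insert_subset_iff, Set.singleton_subset_iff]
  exact ⟨h1, hline, h2, hline'⟩

end Isotropic

/-- Classification of self-dual quadratic nonsymmetric operads with two associative
binary operations: a `4`-dimensional subspace `R` of `ℂ^8` containing the two
associativity relations `e₁ − e₅` and `e₄ − e₈` is self-dual if and only if either
(i) `R` is spanned by `e₁ − e₅`, `e₂ + a e₆ + b e₇`, `e₃ + c e₆ + d e₇`, `e₄ − e₈`
with `a² + b² = 1`, `c² + d² = 1`, `ac + bd = 0`; or
(ii) `R` is spanned by `e₁ − e₅`, `e₂ + εi e₃`, `e₄ − e₈`, `e₆ + ε′i e₇` with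
`ε, ε′ ∈ {1, −1}`. -/
theorem associative_self_dual_classification (R : Submodule ℂ (Fin 8 → ℂ))
    (hdim : Module.finrank ℂ R = 4)
    (h1 : e 0 - e 4 ∈ R) (h2 : e 3 - e 7 ∈ R) :
    R = Bperp R ↔
      ((∃ a b c d : ℂ, a ^ 2 + b ^ 2 = 1 ∧ c ^ 2 + d ^ 2 = 1 ∧ a * c + b * d = 0 ∧
          R = Submodule.span ℂ
            {e 0 - e 4,
             e 1 + a • e 5 + b • e 6,
             e 2 + c • e 5 + d • e 6,
             e 3 - e 7}) ∨
        (∃ ε ε' : ℂ, (ε = 1 ∨ ε = -1) ∧ (ε' = 1 ∨ ε' = -1) ∧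
          R = Submodule.span ℂ
            {e 0 - e 4,
             e 1 + (ε * Complex.I) • e 2,
             e 3 - e 7,
             e 5 + (ε' * Complex.I) • e 6})) := by
  constructor
  · intro hself
    by_cases hdet : ∀ t ∈ R, (∀ i, t (![0, 1, 2, 3] i) = 0) → t = 0
    · exact .inl (exists_graphRelations hdim h1 h2 hself.le hdet)
    · push Not at hdet
      obtain ⟨t, ht, ht0, hne⟩ := hdet
      exact .inr (exists_isotropicRelations hdim h1 h2 hself.le ht ht0 hne)
  · rintro (⟨a, b, c, d, hab, hcd, hacbd, rfl⟩ | ⟨ε, ε', hε, hε', rfl⟩)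
    · exact span_graphRelations_eq_Bperp hab hcd hacbd
    · exact span_isotropicRelations_eq_Bperp hε hε'
end
end

section
/- Let B be the symmetric bilinear form on ℂ^8 defined by B(u,v) = u_1v_1 + u_2v_2 + u_3v_3 + u_4v_4 − u_5v_5 − u_6v_6 − u_7v_7 − u_8v_8. For all W_2, X_1, X_2, Y_1, Y_2, Z_1, Z_2 ∈ ℂ, the subspace R of ℂ^8 spanned by r_1 = e_1 + X_1 e_6 + Y_1 e_7 + Z_1 e_8, r_2 = e_2 + W_2 e_3 + X_2 e_6 + Y_2 e_7 + Z_2 e_8, r_3 = e_4 − e_8, r_4 = e_5 + X_1 e_6 + Y_1 e_7 + Z_1 e_8 satisfies R ≠ R^±. -/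
noncomputable section

/-- Case 2 of the associative classification: for all parameter values, the span of
`r₁ = e₁ + X₁e₆ + Y₁e₇ + Z₁e₈`, `r₂ = e₂ + W₂e₃ + X₂e₆ + Y₂e₇ + Z₂e₈`,
`r₃ = e₄ − e₈`, `r₄ = e₅ + X₁e₆ + Y₁e₇ + Z₁e₈` is never self-dual. -/
theorem associative_case2_not_self_dual (W2 X1 X2 Y1 Y2 Z1 Z2 : ℂ)
    (R : Submodule ℂ (Fin 8 → ℂ))
    (hR : R = Submodule.span ℂ
        {e 0 + X1 • e 5 + Y1 • e 6 + Z1 • e 7,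
         e 1 + W2 • e 2 + X2 • e 5 + Y2 • e 6 + Z2 • e 7,
         e 3 - e 7,
         e 4 + X1 • e 5 + Y1 • e 6 + Z1 • e 7}) :
    R ≠ Bperp R := by
  intro hEq
  set v1 : Fin 8 → ℂ := e 0 + X1 • e 5 + Y1 • e 6 + Z1 • e 7 with hv1
  set v4 : Fin 8 → ℂ := e 4 + X1 • e 5 + Y1 • e 6 + Z1 • e 7 with hv4
  have h1 : v1 ∈ R := by
    rw [hR]; exact Submodule.subset_span (by simp [hv1])
  have h4 : v4 ∈ R := by
    rw [hR]; exact Submodule.subset_span (by simp [hv4])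
  have h1p : v1 ∈ Bperp R := hEq ▸ h1
  have e11 : Bform v1 v1 = 0 := h1p v1 h1
  have e14 : Bform v1 v4 = 0 := h1p v4 h4
  have := congrArg₂ (· - ·) e11 e14
  simp [Bform, hv1, hv4, e, Pi.single_apply] at this
end
end

section
/- Let B be the symmetric bilinear form on ℂ^8 defined by B(u,v) = u_1v_1 + u_2v_2 + u_3v_3 + u_4v_4 − u_5v_5 − u_6v_6 − u_7v_7 − u_8v_8. For all Z_3, Z_4 ∈ ℂ, the subspace R of ℂ^8 spanned by r_1 = e_1 − e_5, r_2 = e_4 − e_8, r_3 = e_6 + Z_3 e_8, r_4 = e_7 + Z_4 e_8 satisfies R ≠ R^±. -/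
noncomputable section

/-- Case 13 of the associative classification: for all values of `Z₃, Z₄`, the span of
`r₁ = e₁ − e₅`, `r₂ = e₄ − e₈`, `r₃ = e₆ + Z₃e₈`, `r₄ = e₇ + Z₄e₈` is never
self-dual. -/
theorem associative_case13_not_self_dual (Z3 Z4 : ℂ)
    (R : Submodule ℂ (Fin 8 → ℂ))
    (hR : R = Submodule.span ℂ
        {e 0 - e 4,
         e 3 - e 7,
         e 5 + Z3 • e 7,
         e 6 + Z4 • e 7}) :
    R ≠ Bperp R := by
  intro h
  have hker : R ≤ LinearMap.ker (LinearMap.proj 1 : (Fin 8 → ℂ) →ₗ[ℂ] ℂ) := by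
    rw [hR, Submodule.span_le]
    intro x hx
    simp only [Set.mem_insert_iff, Set.mem_singleton_iff] at hx
    rcases hx with rfl | rfl | rfl | rfl <;>
      simp [LinearMap.mem_ker, e, Pi.single_apply]
  have he1 : e 1 ∈ Bperp R := by
    intro r hr
    have h1 : r 1 = 0 := hker hr
    simp [Bform, e, Pi.single_apply, h1]
  rw [← h] at he1
  have : (e 1) 1 = 0 := hker he1
  simp [e, Pi.single_apply] at this
end
end
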